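/- arXiv:2311.07181 — 3 statements merged into one kernel-verified Lean document; each statement's English description precedes it below -/
import Mathlib

section
/- The sequence (M_n) of numbers of marriageable singles partitions is strictly increasing for n ≥ 3: M_n < M_{n+1} for all n ≥ 3. -/
/-- `π` is a partition of `[n] = {1,…,n}`: blocks are nonempty, pairwise disjoint,
and their union is exactly `{1,…,n}`. -/
def IsPartitionOf (n : ℕ) (π : Finset (Finset ℕ)) : Prop :=
  (∀ A ∈ π, A.Nonempty) ∧
  (∀ A ∈ π, ∀ B ∈ π, A ≠ B → Disjoint A B) ∧
  (∀ x : ℕ, x ∈ Finset.Icc 1 n ↔ ∃ A ∈ π, x ∈ A)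

/-- `π` is crossing: two distinct blocks contain `a < c < b < d` with `a,b` in one and
`c,d` in the other. -/
def Crossing (π : Finset (Finset ℕ)) : Prop :=
  ∃ A ∈ π, ∃ B ∈ π, A ≠ B ∧ ∃ a ∈ A, ∃ b ∈ A, ∃ c ∈ B, ∃ d ∈ B,
    a < c ∧ c < b ∧ b < d

/-- Noncrossing partition of `[n]`. -/
def IsNCPartition (n : ℕ) (π : Finset (Finset ℕ)) : Prop :=
  IsPartitionOf n π ∧ ¬ Crossing π

/-- Replace the singleton blocks `{i}` and `{j}` by the block `{i,j}`. -/
def mergeSingles (π : Finset (Finset ℕ)) (i j : ℕ) : Finset (Finset ℕ) :=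
  insert {i, j} ((π.erase {i}).erase {j})

/-- A marriageable singles partition of `[n]`. -/
def IsMarriageable (n : ℕ) (π : Finset (Finset ℕ)) : Prop :=
  IsNCPartition n π ∧ ∃ i j : ℕ, i ≠ j ∧ {i} ∈ π ∧ {j} ∈ π ∧
    IsNCPartition n (mergeSingles π i j)

/-- A lonely singles partition of `[n]`. -/
def IsLonely (n : ℕ) (π : Finset (Finset ℕ)) : Prop :=
  IsNCPartition n π ∧ ¬ IsMarriageable n π

/-- `C n`: the number of noncrossing partitions of `[n]`. -/
noncomputable def Cnum (n : ℕ) : ℕ := Set.ncard {π : Finset (Finset ℕ) | IsNCPartition n π}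

/-- `M n`: the number of marriageable singles partitions of `[n]`. -/
noncomputable def Mnum (n : ℕ) : ℕ := Set.ncard {π : Finset (Finset ℕ) | IsMarriageable n π}

/-- `L n`: the number of lonely singles partitions of `[n]`. -/
noncomputable def Lnum (n : ℕ) : ℕ := Set.ncard {π : Finset (Finset ℕ) | IsLonely n π}

/-- `NCcount n m k`: number of noncrossing partitions of `[n]` into `m` blocks with
exactly `k` singleton blocks. -/
noncomputable def NCcount (n m k : ℕ) : ℕ :=
  Set.ncard {π : Finset (Finset ℕ) | IsNCPartition n π ∧ π.card = m ∧
    (π.filter fun A => A.card = 1).card = k}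

/-- Binomial coefficient on integers, `0` when an argument is negative. -/
def zchoose (a b : ℤ) : ℤ := if 0 ≤ a ∧ 0 ≤ b then (a.toNat).choose b.toNat else 0

/-
Adding the singleton block `{n + 1}` maps marriageable singles partitions of `[n]` injectively
to marriageable singles partitions of `[n + 1]`. For `n ≥ 3` the partition
`{1}, {2}, {3, …, n + 1}` of `[n + 1]` is marriageable (marry `1` and `2`) but does not contain
the block `{n + 1}`, so it is missed by this map.
-/

open Finset

lemma IsPartitionOf.subset_Icc {n : ℕ} {π : Finset (Finset ℕ)} (h : IsPartitionOf n π)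
    {A : Finset ℕ} (hA : A ∈ π) : A ⊆ Icc 1 n :=
  fun x hx => (h.2.2 x).2 ⟨A, hA, hx⟩

lemma IsPartitionOf.le_of_mem {n : ℕ} {π : Finset (Finset ℕ)} (h : IsPartitionOf n π)
    {A : Finset ℕ} (hA : A ∈ π) {x : ℕ} (hx : x ∈ A) : x ≤ n :=
  (mem_Icc.1 (h.subset_Icc hA hx)).2

lemma IsPartitionOf.singleton_succ_notMem {n : ℕ} {π : Finset (Finset ℕ)}
    (h : IsPartitionOf n π) : {n + 1} ∉ π :=
  fun hn => by simpa using h.le_of_mem hn (mem_singleton_self _)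

lemma setOf_isPartitionOf_finite (n : ℕ) : {π : Finset (Finset ℕ) | IsPartitionOf n π}.Finite :=
  (Icc 1 n).powerset.powerset.finite_toSet.subset fun _ h =>
    mem_powerset.2 fun _ hA => mem_powerset.2 (IsPartitionOf.subset_Icc h hA)

lemma setOf_isMarriageable_finite (n : ℕ) :
    {π : Finset (Finset ℕ) | IsMarriageable n π}.Finite :=
  (setOf_isPartitionOf_finite n).subset fun _ h => h.1.1

lemma isNCPartition_zero_empty : IsNCPartition 0 ∅ :=
  ⟨⟨by simp, by simp, fun x => by simp⟩, by simp [Crossing]⟩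

lemma IsPartitionOf.insert_Icc {k m : ℕ} {π : Finset (Finset ℕ)} (h : IsPartitionOf k π)
    (hkm : k < m) : IsPartitionOf m (insert (Icc (k + 1) m) π) := by
  have hleft : ∀ A ∈ π, Disjoint (Icc (k + 1) m) A := fun A hA =>
    disjoint_left.2 fun x hx hxA => by have := h.le_of_mem hA hxA; simp at hx; omega
  refine ⟨?_, ?_, fun x => ?_⟩
  · simp only [mem_insert, forall_eq_or_imp, nonempty_Icc]
    exact ⟨by omega, h.1⟩
  · simp only [mem_insert, forall_eq_or_imp]
    refine ⟨⟨fun hne => (hne rfl).elim, fun B hB _ => hleft B hB⟩,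
      fun A hA => ⟨fun _ => (hleft A hA).symm, h.2.1 A hA⟩⟩
  · have := h.2.2 x
    simp only [mem_Icc, exists_mem_insert] at this ⊢
    constructor
    · intro hx
      by_cases hxk : x ≤ k
      · exact .inr (this.1 ⟨hx.1, hxk⟩)
      · exact .inl ⟨by omega, hx.2⟩
    · rintro (hx | hx)
      · omega
      · have := this.2 hx; omega

lemma IsNCPartition.insert_Icc {k m : ℕ} {π : Finset (Finset ℕ)} (h : IsNCPartition k π)
    (hkm : k < m) : IsNCPartition m (insert (Icc (k + 1) m) π) := by
  refine ⟨h.1.insert_Icc hkm, ?_⟩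
  rintro ⟨A, hA, B, hB, hAB, a, ha, b, hb, c, hc, d, hd, hac, hcb, hbd⟩
  rcases mem_insert.1 hA with rfl | hA <;> rcases mem_insert.1 hB with rfl | hB
  · exact hAB rfl
  · have := h.1.le_of_mem hB hc; simp at ha; omega
  · have := h.1.le_of_mem hA hb; simp at hc; omega
  · exact h.2 ⟨A, hA, B, hB, hAB, a, ha, b, hb, c, hc, d, hd, hac, hcb, hbd⟩

lemma IsNCPartition.insert_singleton_succ {n : ℕ} {π : Finset (Finset ℕ)}
    (h : IsNCPartition n π) : IsNCPartition (n + 1) (insert {n + 1} π) := by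
  simpa using h.insert_Icc (Nat.lt_succ_self n)

lemma mergeSingles_insert {π : Finset (Finset ℕ)} {B : Finset ℕ} {i j : ℕ}
    (hi : B ≠ {i}) (hj : B ≠ {j}) :
    mergeSingles (insert B π) i j = insert B (mergeSingles π i j) := by
  rw [mergeSingles, mergeSingles, erase_insert_of_ne hi, erase_insert_of_ne hj, insert_comm]

lemma IsMarriageable.insert_singleton_succ {n : ℕ} {π : Finset (Finset ℕ)}
    (h : IsMarriageable n π) : IsMarriageable (n + 1) (insert {n + 1} π) := by
  obtain ⟨hnc, i, j, hij, hi, hj, hmerge⟩ := h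
  have hne : ∀ {l}, {l} ∈ π → ({n + 1} : Finset ℕ) ≠ {l} :=
    fun hl e => hnc.1.singleton_succ_notMem (e ▸ hl)
  refine ⟨hnc.insert_singleton_succ, i, j, hij, mem_insert_of_mem hi, mem_insert_of_mem hj, ?_⟩
  rw [mergeSingles_insert (hne hi) (hne hj)]
  exact hmerge.insert_singleton_succ

lemma isMarriageable_singles_Icc {n : ℕ} (hn : 2 ≤ n) :
    IsMarriageable (n + 1) {Icc 3 (n + 1), {2}, {1}} := by
  have h3 : 3 ∈ Icc 3 (n + 1) := mem_Icc.2 ⟨le_rfl, by omega⟩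
  have hsingles : IsNCPartition 2 {{2}, {1}} := by
    simpa using (isNCPartition_zero_empty.insert_Icc zero_lt_one).insert_Icc one_lt_two
  have hmerged : IsNCPartition 2 {{1, 2}} := by
    convert isNCPartition_zero_empty.insert_Icc (m := 2) zero_lt_two
    decide
  refine ⟨hsingles.insert_Icc (by omega), 1, 2, (by decide), by simp, by simp, ?_⟩
  have hne : ∀ B : Finset ℕ, B ⊆ {1, 2} → Icc 3 (n + 1) ≠ B :=
    fun B hB e => by have := hB (e ▸ h3); simp at this
  rw [mergeSingles_insert (hne _ (by simp)) (hne _ (by simp))]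
  convert hmerged.insert_Icc (m := n + 1) (by omega) using 2
  decide

theorem stmt4 (n : ℕ) (hn : 3 ≤ n) : Mnum n < Mnum (n + 1) := by
  set S := {π : Finset (Finset ℕ) | IsMarriageable n π}
  set extend : Finset (Finset ℕ) → Finset (Finset ℕ) := insert {n + 1}
  have hinj : Set.InjOn extend S := fun π hπ σ hσ he => by
    simpa [extend, erase_insert hπ.1.1.singleton_succ_notMem,
      erase_insert hσ.1.1.singleton_succ_notMem] using congrArg (·.erase {n + 1}) he
  have hmissed : {Icc 3 (n + 1), {2}, {1}} ∉ extend '' S := by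
    rintro ⟨π, -, he⟩
    have : {n + 1} ∈ ({Icc 3 (n + 1), {2}, {1}} : Finset (Finset ℕ)) := he ▸ mem_insert_self _ _
    simp only [mem_insert, mem_singleton, singleton_inj] at this
    rcases this with h | h | h
    · exact absurd (Icc_eq_singleton_iff.1 h.symm) (by omega)
    all_goals omega
  have hsub : insert {Icc 3 (n + 1), {2}, {1}} (extend '' S) ⊆
      {π | IsMarriageable (n + 1) π} := by
    rintro _ (rfl | ⟨π, hπ, rfl⟩)
    exacts [isMarriageable_singles_Icc (by omega), hπ.insert_singleton_succ]
  calc Mnum n = (extend '' S).ncard := hinj.ncard_image.symm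
    _ < (insert {Icc 3 (n + 1), {2}, {1}} (extend '' S)).ncard := by
      rw [Set.ncard_insert_of_notMem hmissed ((setOf_isMarriageable_finite n).image _)]
      exact Nat.lt_succ_self _
    _ ≤ Mnum (n + 1) := Set.ncard_le_ncard hsub (setOf_isMarriageable_finite _)
end

section
/- For all n ≥ 2, the number L_n of lonely singles partitions of [n] satisfies L_n ≥ Σ_{m=1}^{⌊n/2⌋} (1/(n−m+1))·C(n,m)·C(n−m−1,m−1) + Σ_{m=2}^{⌊(n+1)/2⌋} C(n,m−1)·C(n−m−1,m−2). -/
/-!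
Singleton-free noncrossing partitions and noncrossing partitions with exactly one singleton block
are lonely, and the two families are disjoint.

A singleton-free noncrossing partition of `[n]` is read off a Łukasiewicz path of length `n`: a
block of size `s` is an up-step of height `s - 1` at its least element, and each of its other
elements is a down-step closing one of the `s - 1` levels opened there. By the cycle lemma, a walk
of length `n + 1` from `0` to `-1` whose `m` up-steps have heights forming a composition of `n - m`,
all other steps being down-steps of height one, becomes such a path when rotated at its first
minimum, and the walk is recovered from the path and the rotation point. There are
`C(n+1,m) C(n-m-1,m-1)` such walks, so `n + 1` times the number of singleton-free partitions bounds
the first sum. Inserting a singleton `{i}`, `1 ≤ i ≤ n`, into a singleton-free partition of `[n-1]`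
is injective, so there are at least `n` times as many partitions with exactly one singleton, and the
same count for `n - 1` bounds the second sum.
-/

namespace NCPartition

open Finset

section LukasiewiczPath

structure IsLukasiewiczPath (ℓ : ℕ) (P : ℕ → ℤ) : Prop where
  zero : P 0 = 0
  last : P ℓ = 0
  nonneg : ∀ t ≤ ℓ, 0 ≤ P t
  step : ∀ t, 1 ≤ t → t ≤ ℓ → P t = P (t - 1) - 1 ∨ P (t - 1) + 1 ≤ P t

/-- The down-step `j` closes the up-step `i`: after `i` the path first comes down to the level
`P j ∈ [P (i - 1), P i)` at `j`, so an up-step of height `h` is closed by exactly `h` down-steps. -/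
def IsCloser (P : ℕ → ℤ) (i j : ℕ) : Prop :=
  1 ≤ i ∧ i < j ∧ P (i - 1) ≤ P j ∧ ∀ u ∈ Ico i j, P j < P u

instance (P : ℕ → ℤ) (i j : ℕ) : Decidable (IsCloser P i j) := by
  unfold IsCloser; infer_instance

def pathBlock (ℓ : ℕ) (P : ℕ → ℤ) (i : ℕ) : Finset ℕ :=
  (Icc 1 ℓ).filter fun j => j = i ∨ IsCloser P i j

def pathPartition (ℓ : ℕ) (P : ℕ → ℤ) : Finset (Finset ℕ) :=
  ((Icc 1 ℓ).filter fun i => P (i - 1) < P i).image (pathBlock ℓ P)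

variable {ℓ : ℕ} {P Q : ℕ → ℤ} {i j : ℕ}

lemma IsCloser.isUp (h : IsCloser P i j) : P (i - 1) < P i :=
  h.2.2.1.trans_lt (h.2.2.2 i (by simp [h.2.1]))

lemma IsCloser.isDown (G : IsLukasiewiczPath ℓ P) (h : IsCloser P i j) (hj : j ≤ ℓ) :
    P j = P (j - 1) - 1 := by
  obtain ⟨-, hij, -, hmin⟩ := h
  have hlt : P j < P (j - 1) := hmin (j - 1) (by simp only [mem_Ico]; omega)
  rcases G.step j (by omega) hj with h | h
  · exact h
  · omega

lemma IsCloser.left_unique {i' : ℕ} (h : IsCloser P i j) (h' : IsCloser P i' j) : i = i' := by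
  obtain ⟨-, hij, hle, hmin⟩ := h
  obtain ⟨-, hij', hle', hmin'⟩ := h'
  by_contra hne
  rcases Nat.lt_or_gt_of_ne hne with hlt | hlt
  · have := hmin (i' - 1) (by simp only [mem_Ico]; omega)
    omega
  · have := hmin' (i - 1) (by simp only [mem_Ico]; omega)
    omega

lemma IsCloser.eq_of_apply_eq {j' : ℕ} (h : IsCloser P i j) (h' : IsCloser P i j')
    (he : P j = P j') : j = j' := by
  by_contra hne
  rcases Nat.lt_or_gt_of_ne hne with hlt | hlt
  · have := h'.2.2.2 j (by simp only [mem_Ico]; exact ⟨h.2.1.le, hlt⟩)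
    omega
  · have := h.2.2.2 j' (by simp only [mem_Ico]; exact ⟨h'.2.1.le, hlt⟩)
    omega

/-- The closed up-step is the last `i ≤ j` with `P (i - 1) ≤ P j`. -/
lemma IsLukasiewiczPath.exists_isCloser (G : IsLukasiewiczPath ℓ P) (hj1 : 1 ≤ j) (hjℓ : j ≤ ℓ)
    (hdown : P j < P (j - 1)) : ∃ i, IsCloser P i j := by
  set F := (Icc 1 j).filter fun i => P (i - 1) ≤ P j
  have h1F : 1 ∈ F := by
    simp only [F, mem_filter, mem_Icc]
    exact ⟨⟨le_rfl, hj1⟩, by simpa [G.zero] using G.nonneg j hjℓ⟩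
  obtain ⟨i, hiF, hmax⟩ := exists_max_image F id ⟨1, h1F⟩
  simp only [F, mem_filter, mem_Icc] at hiF
  have hij : i ≠ j := by
    rintro rfl
    omega
  refine ⟨i, hiF.1.1, by omega, hiF.2, fun u hu => ?_⟩
  simp only [mem_Ico] at hu
  by_contra! hle
  have := hmax (u + 1) (by simp only [F, mem_filter, mem_Icc]; exact ⟨by omega, by simpa using hle⟩)
  simp only [id] at this
  omega

/-- The closer is the first position after `i` at which the path is at most `v`. -/
lemma IsLukasiewiczPath.exists_isCloser_apply_eq (G : IsLukasiewiczPath ℓ P) (hi1 : 1 ≤ i)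
    (hiℓ : i ≤ ℓ) {v : ℤ} (hv1 : P (i - 1) ≤ v) (hv2 : v < P i) :
    ∃ j, j ≤ ℓ ∧ IsCloser P i j ∧ P j = v := by
  have hv0 : 0 ≤ v := (G.nonneg (i - 1) (by omega)).trans hv1
  have hiℓ' : i < ℓ := by
    refine lt_of_le_of_ne hiℓ fun h => ?_
    rw [h, G.last] at hv2
    omega
  set F := (Ioc i ℓ).filter fun j => P j ≤ v
  have hne : F.Nonempty :=
    ⟨ℓ, by simp only [F, mem_filter, mem_Ioc]; exact ⟨⟨hiℓ', le_rfl⟩, by rw [G.last]; exact hv0⟩⟩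
  set j := F.min' hne
  have hjF : j ∈ F := F.min'_mem hne
  simp only [F, mem_filter, mem_Ioc] at hjF
  have hmid : ∀ u, i < u → u < j → v < P u := by
    intro u h1 h2
    by_contra! hle
    have := F.min'_le u (by simp only [F, mem_filter, mem_Ioc]; exact ⟨⟨h1, by omega⟩, hle⟩)
    omega
  have hbefore : v < P (j - 1) := by
    rcases Nat.lt_or_ge i (j - 1) with h | h
    · exact hmid _ h (by omega)
    · rwa [show j - 1 = i by omega]
  have hPj : P j = v := by
    rcases G.step j (by omega) hjF.1.2 with h | h <;> omega
  refine ⟨j, hjF.1.2, ⟨hi1, hjF.1.1, by omega, fun u hu => ?_⟩, hPj⟩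
  simp only [mem_Ico] at hu
  rw [hPj]
  rcases Nat.eq_or_lt_of_le hu.1 with h | h
  · rwa [← h]
  · exact hmid u h hu.2

lemma mem_pathBlock : j ∈ pathBlock ℓ P i ↔ j ∈ Icc 1 ℓ ∧ (j = i ∨ IsCloser P i j) := by
  simp [pathBlock]

lemma mem_pathBlock_self (hi1 : 1 ≤ i) (hiℓ : i ≤ ℓ) : i ∈ pathBlock ℓ P i :=
  mem_pathBlock.mpr ⟨mem_Icc.mpr ⟨hi1, hiℓ⟩, Or.inl rfl⟩

lemma IsCloser.mem_pathBlock (h : IsCloser P i j) (hjℓ : j ≤ ℓ) : j ∈ pathBlock ℓ P i :=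
  NCPartition.mem_pathBlock.mpr ⟨mem_Icc.mpr ⟨h.1.trans h.2.1.le, hjℓ⟩, Or.inr h⟩

lemma le_of_mem_pathBlock (h : j ∈ pathBlock ℓ P i) : i ≤ j := by
  rcases (mem_pathBlock.mp h).2 with rfl | hc
  · exact le_rfl
  · exact hc.2.1.le

lemma IsLukasiewiczPath.card_pathBlock (G : IsLukasiewiczPath ℓ P) (hi1 : 1 ≤ i) (hiℓ : i ≤ ℓ)
    (hup : P (i - 1) < P i) : ((pathBlock ℓ P i).card : ℤ) = P i - P (i - 1) + 1 := by
  have hsplit : pathBlock ℓ P i = insert i ((Icc 1 ℓ).filter (IsCloser P i)) := by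
    ext j
    simp only [mem_pathBlock, mem_insert, mem_filter]
    constructor
    · rintro ⟨hj, rfl | h⟩
      · exact Or.inl rfl
      · exact Or.inr ⟨hj, h⟩
    · rintro (rfl | ⟨hj, h⟩)
      · exact ⟨mem_Icc.mpr ⟨hi1, hiℓ⟩, Or.inl rfl⟩
      · exact ⟨hj, Or.inr h⟩
  have hclosers : ((Icc 1 ℓ).filter (IsCloser P i)).card = (Ico (P (i - 1)) (P i)).card := by
    apply card_nbij P
    · intro j hj
      simp only [mem_coe, mem_filter] at hj
      simp only [coe_Ico, Set.mem_Ico]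
      exact ⟨hj.2.2.2.1, hj.2.2.2.2 i (by simp only [mem_Ico]; exact ⟨le_rfl, hj.2.2.1⟩)⟩
    · intro j1 hj1 j2 hj2 he
      simp only [mem_coe, mem_filter] at hj1 hj2
      exact hj1.2.eq_of_apply_eq hj2.2 he
    · intro v hv
      simp only [coe_Ico, Set.mem_Ico] at hv
      obtain ⟨j, hjℓ, hc, hPj⟩ := G.exists_isCloser_apply_eq hi1 hiℓ hv.1 hv.2
      exact ⟨j, by simpa using ⟨mem_Icc.mp (mem_pathBlock.mp (hc.mem_pathBlock hjℓ)).1, hc⟩, hPj⟩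
  rw [hsplit, card_insert_of_notMem (by simp [IsCloser]), hclosers, Int.card_Ico]
  push_cast [Int.toNat_of_nonneg (by omega : (0 : ℤ) ≤ P i - P (i - 1))]
  ring

lemma mem_pathPartition {A : Finset ℕ} :
    A ∈ pathPartition ℓ P ↔ ∃ i, (1 ≤ i ∧ i ≤ ℓ ∧ P (i - 1) < P i) ∧ A = pathBlock ℓ P i := by
  simp only [pathPartition, mem_image, mem_filter, mem_Icc, and_assoc, eq_comm]

lemma pathBlock_mem_pathPartition (hi1 : 1 ≤ i) (hiℓ : i ≤ ℓ) (hup : P (i - 1) < P i) :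
    pathBlock ℓ P i ∈ pathPartition ℓ P :=
  mem_pathPartition.mpr ⟨i, ⟨hi1, hiℓ, hup⟩, rfl⟩

lemma IsLukasiewiczPath.eq_pathBlock_of_mem (G : IsLukasiewiczPath ℓ P) {A : Finset ℕ}
    (hA : A ∈ pathPartition ℓ P) (hj : j ∈ A) :
    (P (j - 1) < P j → A = pathBlock ℓ P j) ∧ ∀ i, IsCloser P i j → A = pathBlock ℓ P i := by
  obtain ⟨i₀, ⟨-, -, hup⟩, rfl⟩ := mem_pathPartition.mp hA
  have hjℓ := (mem_Icc.mp (mem_pathBlock.mp hj).1).2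
  rcases (mem_pathBlock.mp hj).2 with rfl | hc
  · refine ⟨fun _ => rfl, fun i hi => ?_⟩
    have := hi.isDown G hjℓ
    omega
  · have := hc.isDown G hjℓ
    exact ⟨fun h => by omega, fun i hi => by rw [hi.left_unique hc]⟩

lemma IsLukasiewiczPath.disjoint_of_mem_pathPartition (G : IsLukasiewiczPath ℓ P) {A B : Finset ℕ}
    (hA : A ∈ pathPartition ℓ P) (hB : B ∈ pathPartition ℓ P) (hAB : A ≠ B) : Disjoint A B := by
  rw [disjoint_left]
  intro j hjA hjB
  apply hAB
  obtain ⟨i₀, -, rfl⟩ := mem_pathPartition.mp hA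
  obtain ⟨hj1, hjℓ⟩ := mem_Icc.mp (mem_pathBlock.mp hjA).1
  rcases G.step j hj1 hjℓ with h | h
  · obtain ⟨i, hi⟩ := G.exists_isCloser hj1 hjℓ (by omega)
    rw [(G.eq_pathBlock_of_mem hA hjA).2 i hi, (G.eq_pathBlock_of_mem hB hjB).2 i hi]
  · rw [(G.eq_pathBlock_of_mem hA hjA).1 (by omega), (G.eq_pathBlock_of_mem hB hjB).1 (by omega)]

lemma IsLukasiewiczPath.isPartitionOf (G : IsLukasiewiczPath ℓ P) :
    IsPartitionOf ℓ (pathPartition ℓ P) := by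
  refine ⟨fun A hA => ?_, fun A hA B hB => G.disjoint_of_mem_pathPartition hA hB,
    fun x => ⟨fun hx => ?_, ?_⟩⟩
  · obtain ⟨i, ⟨hi1, hiℓ, -⟩, rfl⟩ := mem_pathPartition.mp hA
    exact ⟨i, mem_pathBlock_self hi1 hiℓ⟩
  · obtain ⟨hx1, hxℓ⟩ := mem_Icc.mp hx
    rcases G.step x hx1 hxℓ with h | h
    · obtain ⟨i, hi⟩ := G.exists_isCloser hx1 hxℓ (by omega)
      exact ⟨_, pathBlock_mem_pathPartition hi.1 (by have := hi.2.1; omega) hi.isUp,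
        hi.mem_pathBlock hxℓ⟩
    · exact ⟨_, pathBlock_mem_pathPartition hx1 hxℓ (by omega), mem_pathBlock_self hx1 hxℓ⟩
  · rintro ⟨A, hA, hxA⟩
    obtain ⟨i, -, rfl⟩ := mem_pathPartition.mp hA
    exact (mem_pathBlock.mp hxA).1

lemma IsLukasiewiczPath.two_le_card_of_mem_pathPartition (G : IsLukasiewiczPath ℓ P) {A : Finset ℕ}
    (hA : A ∈ pathPartition ℓ P) : 2 ≤ A.card := by
  obtain ⟨i, ⟨hi1, hiℓ, hup⟩, rfl⟩ := mem_pathPartition.mp hA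
  have := G.card_pathBlock hi1 hiℓ hup
  omega

lemma not_crossing_pathPartition : ¬ Crossing (pathPartition ℓ P) := by
  rintro ⟨A, hA, B, hB, hAB, a, ha, b, hb, c, hc, d, hd, hac, hcb, hbd⟩
  obtain ⟨i₁, -, rfl⟩ := mem_pathPartition.mp hA
  obtain ⟨i₂, -, rfl⟩ := mem_pathPartition.mp hB
  have hi₁ : i₁ ≤ a := le_of_mem_pathBlock ha
  have hi₂ : i₂ ≤ c := le_of_mem_pathBlock hc
  have hne : i₁ ≠ i₂ := fun h => hAB (by rw [h])
  have closer_of_lt {i k : ℕ} (hk : k ∈ pathBlock ℓ P i) (hik : i < k) : IsCloser P i k := by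
    rcases (mem_pathBlock.mp hk).2 with rfl | h
    · omega
    · exact h
  have hb₁ := closer_of_lt hb (by omega)
  have hd₂ := closer_of_lt hd (by omega)
  have hdb : P d < P b := hd₂.2.2.2 b (by simp only [mem_Ico]; omega)
  rcases Nat.lt_or_gt_of_ne hne with hlt | hlt
  · have := hb₁.2.2.2 (i₂ - 1) (by simp only [mem_Ico]; omega)
    have := hd₂.2.2.1
    omega
  · have hc₂ := closer_of_lt hc (by omega)
    have := hc₂.2.2.2 (i₁ - 1) (by simp only [mem_Ico]; omega)
    have := hb₁.2.2.1
    have := hb₁.2.2.2 c (by simp only [mem_Ico]; omega)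
    omega

/-- The step of a Łukasiewicz path at `j`, read off its partition: `A` is the block containing `j`,
and `j` is an up-step, of height `|A| - 1`, iff it is the least element of `A`. -/
def stepAt (π : Finset (Finset ℕ)) (j : ℕ) : ℤ :=
  let A := (π.filter (j ∈ ·)).biUnion id
  if h : A.Nonempty then (if A.min' h = j then (A.card : ℤ) - 1 else -1) else -1

lemma IsLukasiewiczPath.filter_mem_pathPartition (G : IsLukasiewiczPath ℓ P) {A : Finset ℕ}
    (hA : A ∈ pathPartition ℓ P) (hjA : j ∈ A) :
    (pathPartition ℓ P).filter (j ∈ ·) = {A} := by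
  ext B
  simp only [mem_filter, mem_singleton]
  refine ⟨fun ⟨hB, hjB⟩ => ?_, by rintro rfl; exact ⟨hA, hjA⟩⟩
  by_contra hne
  exact disjoint_left.mp (G.disjoint_of_mem_pathPartition hB hA hne) hjB hjA

lemma IsLukasiewiczPath.stepAt_pathPartition (G : IsLukasiewiczPath ℓ P) (hj1 : 1 ≤ j)
    (hjℓ : j ≤ ℓ) : stepAt (pathPartition ℓ P) j = P j - P (j - 1) := by
  rcases G.step j hj1 hjℓ with h | h
  · obtain ⟨i, hi⟩ := G.exists_isCloser hj1 hjℓ (by omega)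
    have hiℓ : i ≤ ℓ := by have := hi.2.1; omega
    have hne : (pathBlock ℓ P i).Nonempty := ⟨i, mem_pathBlock_self hi.1 hiℓ⟩
    have hmin : (pathBlock ℓ P i).min' hne ≠ j := by
      have := min'_le _ _ (mem_pathBlock_self (P := P) hi.1 hiℓ)
      have := hi.2.1
      omega
    rw [stepAt, G.filter_mem_pathPartition (pathBlock_mem_pathPartition hi.1 hiℓ hi.isUp)
      (hi.mem_pathBlock hjℓ), singleton_biUnion, id, dif_pos hne, if_neg hmin]
    omega
  · have hup : P (j - 1) < P j := by omega
    have hne : (pathBlock ℓ P j).Nonempty := ⟨j, mem_pathBlock_self hj1 hjℓ⟩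
    have hmin : (pathBlock ℓ P j).min' hne = j :=
      le_antisymm (min'_le _ _ (mem_pathBlock_self hj1 hjℓ))
        (le_min' _ _ _ fun _ hy => le_of_mem_pathBlock hy)
    rw [stepAt, G.filter_mem_pathPartition (pathBlock_mem_pathPartition hj1 hjℓ hup)
      (mem_pathBlock_self hj1 hjℓ), singleton_biUnion, id, dif_pos hne, if_pos hmin,
      G.card_pathBlock hj1 hjℓ hup]
    ring

lemma IsLukasiewiczPath.eqOn_of_pathPartition_eq (G : IsLukasiewiczPath ℓ P)
    (G' : IsLukasiewiczPath ℓ Q) (h : pathPartition ℓ P = pathPartition ℓ Q) :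
    ∀ t ≤ ℓ, P t = Q t := by
  intro t ht
  induction t with
  | zero => rw [G.zero, G'.zero]
  | succ t ih =>
    have hP := G.stepAt_pathPartition (Nat.le_add_left 1 t) ht
    have hQ := G'.stepAt_pathPartition (Nat.le_add_left 1 t) ht
    rw [h, hQ] at hP
    simp only [Nat.add_sub_cancel] at hP
    linarith [ih (by omega)]

end LukasiewiczPath

section Rotation

structure IsLukasiewiczWalk (N : ℕ) (W : ℕ → ℤ) : Prop where
  zero : W 0 = 0
  last : W N = -1
  step : ∀ t, 1 ≤ t → t ≤ N → W t = W (t - 1) - 1 ∨ W (t - 1) + 1 ≤ W t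

lemma exists_apply_eq_inf' (N : ℕ) (W : ℕ → ℤ) :
    ∃ j, j ≤ N ∧ W j = (range (N + 1)).inf' nonempty_range_add_one W := by
  obtain ⟨j, hj, h⟩ := exists_mem_eq_inf' nonempty_range_add_one W
  exact ⟨j, Nat.lt_succ_iff.mp (mem_range.mp hj), h.symm⟩

def firstArgmin (N : ℕ) (W : ℕ → ℤ) : ℕ := Nat.find (exists_apply_eq_inf' N W)

/-- The walk `W` read cyclically from position `k`; past position `N` it continues from
`W N = -1`. -/
def rotate (N k : ℕ) (W : ℕ → ℤ) (t : ℕ) : ℤ :=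
  if k + t ≤ N then W (k + t) - W k else W (t - (N - k)) - 1 - W k

variable {N k : ℕ} {W W' : ℕ → ℤ}

lemma firstArgmin_le : firstArgmin N W ≤ N := (Nat.find_spec (exists_apply_eq_inf' N W)).1

lemma apply_firstArgmin_eq_inf' :
    W (firstArgmin N W) = (range (N + 1)).inf' nonempty_range_add_one W :=
  (Nat.find_spec (exists_apply_eq_inf' N W)).2

lemma apply_firstArgmin_le {u : ℕ} (hu : u ≤ N) : W (firstArgmin N W) ≤ W u := by
  rw [apply_firstArgmin_eq_inf' (W := W)]
  exact inf'_le W (mem_range.mpr (Nat.lt_succ_of_le hu))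

lemma apply_firstArgmin_lt {j : ℕ} (hj : j < firstArgmin N W) : W (firstArgmin N W) < W j := by
  have hjN : j ≤ N := (hj.trans_le firstArgmin_le).le
  refine (apply_firstArgmin_le hjN).lt_of_ne fun h => Nat.find_min _ hj ⟨hjN, ?_⟩
  rw [← h]
  exact apply_firstArgmin_eq_inf' (W := W)

lemma IsLukasiewiczWalk.one_le_firstArgmin (hW : IsLukasiewiczWalk N W) :
    1 ≤ firstArgmin N W := by
  by_contra! h
  have := apply_firstArgmin_le (W := W) (le_refl N)
  rw [Nat.lt_one_iff.mp h, hW.zero, hW.last] at this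
  omega

lemma IsLukasiewiczWalk.apply_firstArgmin (hW : IsLukasiewiczWalk N W) :
    W (firstArgmin N W) = W (firstArgmin N W - 1) - 1 := by
  have hk := hW.one_le_firstArgmin
  have := apply_firstArgmin_lt (W := W) (show firstArgmin N W - 1 < firstArgmin N W by omega)
  rcases hW.step _ hk firstArgmin_le with h | h
  · exact h
  · omega

lemma IsLukasiewiczWalk.exists_rotate_sub_eq (hW : IsLukasiewiczWalk N W) (hk1 : 1 ≤ k)
    (hkN : k ≤ N) {t : ℕ} (ht1 : 1 ≤ t) (htN : t ≤ N - 1) :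
    ∃ i, 1 ≤ i ∧ i ≤ N ∧ rotate N k W t - rotate N k W (t - 1) = W i - W (i - 1) := by
  unfold rotate
  by_cases h : k + t ≤ N
  · refine ⟨k + t, by omega, h, ?_⟩
    rw [if_pos h, if_pos (by omega), show k + t - 1 = k + (t - 1) by omega]
    ring
  · by_cases hwrap : k + t = N + 1
    · refine ⟨1, le_rfl, by omega, ?_⟩
      rw [if_neg h, if_pos (by omega), show k + (t - 1) = N by omega,
        show t - (N - k) = 1 by omega, hW.last, hW.zero]
      ring
    · refine ⟨t - (N - k), by omega, by omega, ?_⟩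
      rw [if_neg h, if_neg (by omega), show t - 1 - (N - k) = t - (N - k) - 1 by omega]
      ring

/-- The cycle lemma. -/
theorem IsLukasiewiczWalk.isLukasiewiczPath_rotate (hW : IsLukasiewiczWalk N W) :
    IsLukasiewiczPath (N - 1) (rotate N (firstArgmin N W) W) := by
  have hk1 := hW.one_le_firstArgmin
  have hkN : firstArgmin N W ≤ N := firstArgmin_le
  have hdown := hW.apply_firstArgmin
  refine ⟨by simp [rotate, hkN], ?_, fun t ht => ?_, fun t ht1 htN => ?_⟩
  · unfold rotate
    by_cases h : firstArgmin N W = 1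
    · rw [h, hW.zero] at hdown
      rw [if_pos (by omega), show firstArgmin N W + (N - 1) = N by omega, hW.last, h, hdown]
      ring
    · rw [if_neg (by omega), show N - 1 - (N - firstArgmin N W) = firstArgmin N W - 1 by omega]
      omega
  · unfold rotate
    split_ifs with h
    · linarith [apply_firstArgmin_le (W := W) h]
    · linarith [apply_firstArgmin_lt (W := W) (N := N) (show t - (N - firstArgmin N W) <
        firstArgmin N W by omega)]
  · obtain ⟨i, hi1, hiN, heq⟩ := hW.exists_rotate_sub_eq hk1 hkN ht1 htN
    rcases hW.step i hi1 hiN with h | h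
    · left; linarith
    · right; linarith

lemma IsLukasiewiczWalk.apply_eq_rotate (hW : IsLukasiewiczWalk N W) (hkN : k ≤ N) {i : ℕ}
    (hiN : i ≤ N) :
    W i = if k ≤ i then rotate N k W (i - k) - 1 - rotate N k W (N - k)
      else rotate N k W (i + (N - k)) - rotate N k W (N - k) := by
  have hend : rotate N k W (N - k) = -1 - W k := by
    rw [rotate, if_pos (by omega), show k + (N - k) = N by omega, hW.last]
  rw [hend]
  split_ifs with h
  · rw [rotate, if_pos (by omega), show k + (i - k) = i by omega]
    ring
  · rcases Nat.eq_zero_or_pos i with rfl | hi0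
    · rw [zero_add, hend, hW.zero]
      ring
    · rw [rotate, if_neg (by omega), show i + (N - k) - (N - k) = i by omega]
      ring

lemma IsLukasiewiczWalk.eqOn_of_rotate_eqOn (hW : IsLukasiewiczWalk N W)
    (hW' : IsLukasiewiczWalk N W') (hk1 : 1 ≤ k) (hkN : k ≤ N)
    (h : ∀ t ≤ N - 1, rotate N k W t = rotate N k W' t) {i : ℕ} (hiN : i ≤ N) : W i = W' i := by
  rw [hW.apply_eq_rotate hkN hiN, hW'.apply_eq_rotate hkN hiN, h (N - k) (by omega)]
  split_ifs <;> rw [h _ (by omega)]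

end Rotation

section WalkCode

def rank (S : Finset ℕ) (i : ℕ) : ℕ := (S.filter (· ≤ i)).card

/-- The `r`-th element of `T` in increasing order, with `cutPoint T D 0 = 0` and
`cutPoint T D r = D` past the end: the partial sums of the composition of `D` cut at `T`. -/
def cutPoint (T : Finset ℕ) (D r : ℕ) : ℕ :=
  if r = 0 then 0 else (T.sort (· ≤ ·)).getD (r - 1) D

/-- The walk with up-steps at the positions in `S`, whose heights are the parts of the composition
of `D` cut at `T`, and down-steps of height one elsewhere. -/
def walkOfCode (D : ℕ) (S T : Finset ℕ) (i : ℕ) : ℤ :=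
  (cutPoint T D (rank S i) : ℤ) + rank S i - i

structure IsWalkCode (N m D : ℕ) (S T : Finset ℕ) : Prop where
  subset_up : S ⊆ Icc 1 N
  card_up : S.card = m
  subset_cut : T ⊆ Icc 1 (D - 1)
  card_cut : T.card = m - 1
  length_eq : N = m + D + 1
  one_le_card : 1 ≤ m
  one_le_total : 1 ≤ D

variable {N m D : ℕ} {S T : Finset ℕ} {i : ℕ}

lemma rank_zero (hS : S ⊆ Icc 1 N) : rank S 0 = 0 := by
  rw [rank, card_eq_zero, filter_eq_empty_iff]
  intro x hx
  have := mem_Icc.mp (hS hx)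
  omega

lemma rank_eq_card (hS : S ⊆ Icc 1 N) : rank S N = S.card := by
  rw [rank, filter_true_of_mem fun x hx => (mem_Icc.mp (hS hx)).2]

lemma rank_le_card : rank S i ≤ S.card := card_le_card (filter_subset _ _)

lemma one_le_rank (hi : i ∈ S) : 1 ≤ rank S i :=
  card_pos.mpr ⟨i, mem_filter.mpr ⟨hi, le_rfl⟩⟩

lemma rank_of_mem (hi1 : 1 ≤ i) (hi : i ∈ S) : rank S i = rank S (i - 1) + 1 := by
  rw [rank, rank, ← card_insert_of_notMem (s := S.filter (· ≤ i - 1)) (a := i) (by simp; omega)]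
  congr 1
  ext x
  simp only [mem_filter, mem_insert]
  constructor
  · rintro ⟨hx, hxi⟩
    rcases eq_or_ne x i with rfl | hne
    · exact Or.inl rfl
    · exact Or.inr ⟨hx, by omega⟩
  · rintro (rfl | ⟨hx, hxi⟩)
    · exact ⟨hi, le_rfl⟩
    · exact ⟨hx, by omega⟩

lemma rank_of_notMem (hi : i ∉ S) : rank S i = rank S (i - 1) := by
  rw [rank, rank]
  congr 1
  ext x
  simp only [mem_filter]
  constructor
  · rintro ⟨hx, hxi⟩
    exact ⟨hx, by rcases eq_or_ne x i with rfl | hne <;> [exact absurd hx hi; omega]⟩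
  · rintro ⟨hx, hxi⟩
    exact ⟨hx, by omega⟩

lemma rank_lt_rank {j : ℕ} (hj : j ∈ S) (hij : i < j) : rank S i < rank S j := by
  refine card_lt_card ⟨fun x hx => ?_, fun hsub => ?_⟩
  · simp only [mem_filter] at hx ⊢
    exact ⟨hx.1, by omega⟩
  · have := (mem_filter.mp (hsub (mem_filter.mpr ⟨hj, le_rfl⟩))).2
    omega

lemma exists_rank_eq (hSc : S.card = m) {r : ℕ} (hr1 : 1 ≤ r) (hrm : r ≤ m) :
    ∃ i ∈ S, rank S i = r := by
  obtain ⟨i, hi, hri⟩ := surj_on_of_inj_on_of_card_le (s := S) (t := Icc 1 m)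
    (fun a _ => rank S a)
    (fun a ha => mem_Icc.mpr ⟨one_le_rank ha, hSc ▸ rank_le_card⟩)
    (fun a₁ a₂ ha₁ ha₂ he => by
      by_contra hne
      rcases Nat.lt_or_gt_of_ne hne with h | h
      · exact (rank_lt_rank ha₂ h).ne he
      · exact (rank_lt_rank ha₁ h).ne' he)
    (by rw [Nat.card_Icc]; omega) r (mem_Icc.mpr ⟨hr1, hrm⟩)
  exact ⟨i, hi, hri.symm⟩

lemma cutPoint_of_card_lt {r : ℕ} (hr : T.card < r) : cutPoint T D r = D := by
  rw [cutPoint, if_neg (by omega)]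
  exact List.getD_eq_default _ _ (by rw [length_sort]; omega)

lemma cutPoint_mem {r : ℕ} (hr1 : 1 ≤ r) (hr : r ≤ T.card) : cutPoint T D r ∈ T := by
  have hlen : r - 1 < (T.sort (· ≤ ·)).length := by rw [length_sort]; omega
  rw [cutPoint, if_neg (by omega), List.getD_eq_getElem _ _ hlen]
  exact (mem_sort _).mp (List.getElem_mem hlen)

lemma cutPoint_strictMonoOn (hT : T ⊆ Icc 1 (D - 1)) (hTc : T.card = m - 1) (hm : 1 ≤ m)
    (hD : 1 ≤ D) {r r' : ℕ} (hrr' : r < r') (hr' : r' ≤ m) :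
    cutPoint T D r < cutPoint T D r' := by
  have hmem {s : ℕ} (hs1 : 1 ≤ s) (hs : s ≤ T.card) : 1 ≤ cutPoint T D s ∧ cutPoint T D s < D := by
    have := mem_Icc.mp (hT (cutPoint_mem (D := D) hs1 hs))
    omega
  rcases Nat.eq_zero_or_pos r with rfl | hr1
  · rcases Nat.lt_or_ge T.card r' with h | h
    · rw [cutPoint_of_card_lt h]
      simp [cutPoint]
      omega
    · simp [cutPoint]; exact (hmem hrr' h).1
  rcases Nat.lt_or_ge T.card r' with h | h
  · rw [cutPoint_of_card_lt h]
    exact (hmem hr1 (by omega)).2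
  · have hlen' : r' - 1 < (T.sort (· ≤ ·)).length := by rw [length_sort]; omega
    have hlen : r - 1 < (T.sort (· ≤ ·)).length := by omega
    rw [cutPoint, cutPoint, if_neg (by omega), if_neg (by omega), List.getD_eq_getElem _ _ hlen,
      List.getD_eq_getElem _ _ hlen']
    exact List.Pairwise.rel_get_of_lt (List.sortedLT_iff_pairwise.mp (sortedLT_sort T))
      (a := ⟨r - 1, hlen⟩) (b := ⟨r' - 1, hlen'⟩) (by simp only [Fin.mk_lt_mk]; omega)

lemma walkOfCode_of_notMem (hi1 : 1 ≤ i) (hi : i ∉ S) :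
    walkOfCode D S T i = walkOfCode D S T (i - 1) - 1 := by
  simp only [walkOfCode, rank_of_notMem hi]
  omega

namespace IsWalkCode

variable (h : IsWalkCode N m D S T)
include h

lemma walkOfCode_zero : walkOfCode D S T 0 = 0 := by
  simp [walkOfCode, rank_zero h.subset_up, cutPoint]

lemma walkOfCode_last : walkOfCode D S T N = -1 := by
  rw [walkOfCode, rank_eq_card h.subset_up, h.card_up, cutPoint_of_card_lt (by
    rw [h.card_cut]; have := h.one_le_card; omega), h.length_eq]
  push_cast
  ring

lemma walkOfCode_up (hi : i ∈ S) :
    walkOfCode D S T (i - 1) + 1 ≤ walkOfCode D S T i := by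
  have hi1 := (mem_Icc.mp (h.subset_up hi)).1
  have hrank := rank_of_mem hi1 hi
  have hlt : cutPoint T D (rank S (i - 1)) < cutPoint T D (rank S i) :=
    cutPoint_strictMonoOn h.subset_cut h.card_cut h.one_le_card h.one_le_total (by omega)
      (h.card_up ▸ rank_le_card)
  simp only [walkOfCode]
  omega

lemma isLukasiewiczWalk : IsLukasiewiczWalk N (walkOfCode D S T) := by
  refine ⟨h.walkOfCode_zero, h.walkOfCode_last, fun t ht1 _ => ?_⟩
  by_cases ht : t ∈ S
  · exact Or.inr (h.walkOfCode_up ht)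
  · exact Or.inl (walkOfCode_of_notMem ht1 ht)

lemma filter_up_eq : (Icc 1 N).filter
    (fun i => walkOfCode D S T (i - 1) < walkOfCode D S T i) = S := by
  ext i
  simp only [mem_filter]
  constructor
  · rintro ⟨hi, hup⟩
    by_contra hiS
    have := walkOfCode_of_notMem (D := D) (T := T) (mem_Icc.mp hi).1 hiS
    omega
  · intro hiS
    exact ⟨h.subset_up hiS, by have := h.walkOfCode_up hiS; omega⟩

lemma filter_cutPoint_eq :
    (Icc 1 (D - 1)).filter (fun v => ∃ i ∈ S, cutPoint T D (rank S i) = v) = T := by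
  ext v
  simp only [mem_filter]
  constructor
  · rintro ⟨hv, i, hiS, rfl⟩
    have hr1 := one_le_rank hiS
    rcases Nat.lt_or_ge T.card (rank S i) with hlt | hle
    · rw [cutPoint_of_card_lt hlt] at hv
      have := mem_Icc.mp hv
      omega
    · exact cutPoint_mem hr1 hle
  · intro hv
    obtain ⟨idx, hidx, hget⟩ := List.getElem_of_mem ((mem_sort (· ≤ ·)).mpr hv)
    have hidx' : idx + 1 ≤ m - 1 := by
      rw [length_sort, h.card_cut] at hidx
      omega
    obtain ⟨i, hiS, hri⟩ := exists_rank_eq h.card_up (r := idx + 1) (by omega) (by omega)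
    refine ⟨h.subset_cut hv, i, hiS, ?_⟩
    rw [hri, cutPoint, if_neg (by omega), Nat.add_sub_cancel, List.getD_eq_getElem _ _ hidx, hget]

end IsWalkCode

lemma IsWalkCode.eq_of_walkOfCode_eqOn {m' D' : ℕ} {S' T' : Finset ℕ} (h : IsWalkCode N m D S T)
    (h' : IsWalkCode N m' D' S' T') (heq : ∀ i ≤ N, walkOfCode D S T i = walkOfCode D' S' T' i) :
    S = S' ∧ T = T' := by
  have hS : S = S' := by
    rw [← h.filter_up_eq, ← h'.filter_up_eq]
    refine filter_congr fun i hi => ?_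
    rw [heq i (mem_Icc.mp hi).2, heq (i - 1) (by have := (mem_Icc.mp hi).2; omega)]
  subst hS
  have hD : D = D' := by
    have := h.length_eq
    have := h'.length_eq
    have := h.card_up
    have := h'.card_up
    omega
  subst hD
  refine ⟨rfl, ?_⟩
  rw [← h.filter_cutPoint_eq, ← h'.filter_cutPoint_eq]
  refine filter_congr fun v _ => exists_congr fun i => and_congr_right fun hiS => ?_
  have hiN := (mem_Icc.mp (h.subset_up hiS)).2
  have := heq i hiN
  simp only [walkOfCode] at this
  omega

end WalkCode

lemma setOf_isPartitionOf_finite (n : ℕ) : {π | IsPartitionOf n π}.Finite := by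
  refine (Icc 1 n).powerset.powerset.finite_toSet.subset fun π hπ => ?_
  simp only [mem_coe, mem_powerset]
  exact fun A hA => mem_powerset.mpr fun a ha => (hπ.2.2 a).mpr ⟨A, hA, ha⟩

section SingletonFree

def singletonFree (n : ℕ) : Set (Finset (Finset ℕ)) :=
  {π | IsNCPartition n π ∧ ∀ A ∈ π, 2 ≤ A.card}

lemma singletonFree_finite (n : ℕ) : (singletonFree n).Finite :=
  (setOf_isPartitionOf_finite n).subset fun _ hπ => hπ.1.1

/-- `⟨m, S, T⟩` codes the walk of length `n + 1` with up-steps at the `m` positions in `S`, whose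
heights are the parts of the composition of `n - m` cut at `T`. -/
def walkCodes (n : ℕ) : Finset (Σ _ : ℕ, Finset ℕ × Finset ℕ) :=
  (Icc 1 (n / 2)).sigma fun m =>
    (Icc 1 (n + 1)).powersetCard m ×ˢ (Icc 1 (n - m - 1)).powersetCard (m - 1)

def codeWalk (n : ℕ) (x : Σ _ : ℕ, Finset ℕ × Finset ℕ) : ℕ → ℤ :=
  walkOfCode (n - x.1) x.2.1 x.2.2

def partitionOfCode (n : ℕ) (x : Σ _ : ℕ, Finset ℕ × Finset ℕ) : Finset (Finset ℕ) × ℕ :=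
  (pathPartition n (rotate (n + 1) (firstArgmin (n + 1) (codeWalk n x)) (codeWalk n x)),
    firstArgmin (n + 1) (codeWalk n x))

variable {n : ℕ}

lemma card_walkCodes :
    (walkCodes n).card = ∑ m ∈ Icc 1 (n / 2), (n + 1).choose m * (n - m - 1).choose (m - 1) := by
  rw [walkCodes, card_sigma]
  refine sum_congr rfl fun m _ => ?_
  rw [card_product, card_powersetCard, card_powersetCard, Nat.card_Icc, Nat.card_Icc]
  simp

lemma isWalkCode_of_mem_walkCodes {m : ℕ} {S T : Finset ℕ} (hx : ⟨m, (S, T)⟩ ∈ walkCodes n) :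
    IsWalkCode (n + 1) m (n - m) S T := by
  simp only [walkCodes, mem_sigma, mem_product, mem_powersetCard, mem_Icc] at hx
  obtain ⟨⟨hm1, hm⟩, ⟨hS, hSc⟩, hT, hTc⟩ := hx
  exact ⟨hS, hSc, hT, hTc, by omega, hm1, by omega⟩

lemma partitionOfCode_mem {x : Σ _ : ℕ, Finset ℕ × Finset ℕ} (hx : x ∈ walkCodes n) :
    partitionOfCode n x ∈ singletonFree n ×ˢ (Icc 1 (n + 1) : Set ℕ) := by
  obtain ⟨m, S, T⟩ := x
  have hW : IsLukasiewiczWalk (n + 1) (codeWalk n ⟨m, (S, T)⟩) :=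
    (isWalkCode_of_mem_walkCodes hx).isLukasiewiczWalk
  have G : IsLukasiewiczPath n _ := hW.isLukasiewiczPath_rotate
  exact ⟨⟨⟨G.isPartitionOf, not_crossing_pathPartition⟩,
      fun A hA => G.two_le_card_of_mem_pathPartition hA⟩,
    mem_coe.mpr (mem_Icc.mpr ⟨hW.one_le_firstArgmin, firstArgmin_le⟩)⟩

lemma injOn_partitionOfCode : Set.InjOn (partitionOfCode n) (walkCodes n) := by
  rintro ⟨m, S, T⟩ hx ⟨m', S', T'⟩ hx' heq
  have h := isWalkCode_of_mem_walkCodes (mem_coe.mp hx)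
  have h' := isWalkCode_of_mem_walkCodes (mem_coe.mp hx')
  have hW : IsLukasiewiczWalk (n + 1) (codeWalk n ⟨m, (S, T)⟩) := h.isLukasiewiczWalk
  have hW' : IsLukasiewiczWalk (n + 1) (codeWalk n ⟨m', (S', T')⟩) := h'.isLukasiewiczWalk
  simp only [partitionOfCode, Prod.mk.injEq] at heq
  obtain ⟨hpart, hk⟩ := heq
  have G : IsLukasiewiczPath n _ := hW.isLukasiewiczPath_rotate
  have G' : IsLukasiewiczPath n _ := hW'.isLukasiewiczPath_rotate
  rw [← hk] at hpart G'
  have hwalk := fun i (hi : i ≤ n + 1) => hW.eqOn_of_rotate_eqOn hW' hW.one_le_firstArgmin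
    firstArgmin_le (G.eqOn_of_pathPartition_eq G' hpart) hi
  obtain ⟨rfl, rfl⟩ := h.eq_of_walkOfCode_eqOn h' hwalk
  obtain rfl : m = m' := h.card_up.symm.trans h'.card_up
  rfl

theorem sum_choose_le_mul_ncard_singletonFree (n : ℕ) :
    ∑ m ∈ Icc 1 (n / 2), (n + 1).choose m * (n - m - 1).choose (m - 1)
      ≤ (n + 1) * (singletonFree n).ncard := by
  rw [← card_walkCodes, ← Set.ncard_coe_finset]
  calc _ ≤ (singletonFree n ×ˢ (Icc 1 (n + 1) : Set ℕ)).ncard :=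
        Set.ncard_le_ncard_of_injOn _ (fun _ hx => partitionOfCode_mem hx) injOn_partitionOfCode
          ((singletonFree_finite n).prod (finite_toSet _))
    _ = (n + 1) * (singletonFree n).ncard := by
        rw [Set.ncard_prod, Set.ncard_coe_finset, Nat.card_Icc, Nat.add_sub_cancel, mul_comm]

end SingletonFree

section InsertSingleton

def succAbove (i x : ℕ) : ℕ := if x < i then x else x + 1

def insertSingleton (i : ℕ) (π : Finset (Finset ℕ)) : Finset (Finset ℕ) :=
  insert {i} (π.image (image (succAbove i)))

variable {n i : ℕ} {π : Finset (Finset ℕ)}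

lemma succAbove_strictMono (i : ℕ) : StrictMono (succAbove i) := by
  intro x y hxy
  unfold succAbove
  split_ifs <;> omega

lemma succAbove_ne (i x : ℕ) : succAbove i x ≠ i := by
  unfold succAbove
  split_ifs <;> omega

lemma image_succAbove_Icc (hi1 : 1 ≤ i) (hin : i ≤ n) :
    (Icc 1 (n - 1)).image (succAbove i) = (Icc 1 n).erase i := by
  ext x
  simp only [mem_image, mem_erase, mem_Icc]
  constructor
  · rintro ⟨y, hy, rfl⟩
    refine ⟨succAbove_ne i y, ?_⟩
    unfold succAbove
    split_ifs <;> omega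
  · rintro ⟨hne, hx⟩
    by_cases h : x < i
    · exact ⟨x, by omega, by simp [succAbove, h]⟩
    · exact ⟨x - 1, by omega, by rw [succAbove, if_neg (by omega)]; omega⟩

lemma isPartitionOf_insertSingleton (hi1 : 1 ≤ i) (hin : i ≤ n)
    (hπ : IsPartitionOf (n - 1) π) : IsPartitionOf n (insertSingleton i π) := by
  obtain ⟨hne, hdisj, hcover⟩ := hπ
  have hnotMem : ∀ A ∈ π, i ∉ A.image (succAbove i) := fun A _ hi => by
    obtain ⟨y, -, hy⟩ := mem_image.mp hi
    exact succAbove_ne i y hy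
  refine ⟨fun A hA => ?_, fun A hA B hB hAB => ?_, fun x => ?_⟩
  · rcases mem_insert.mp hA with rfl | hA
    · exact singleton_nonempty i
    · obtain ⟨A₀, hA₀, rfl⟩ := mem_image.mp hA
      exact (hne A₀ hA₀).image _
  · rcases mem_insert.mp hA with rfl | hA <;> rcases mem_insert.mp hB with rfl | hB
    · exact absurd rfl hAB
    · obtain ⟨B₀, hB₀, rfl⟩ := mem_image.mp hB
      exact disjoint_singleton_left.mpr (hnotMem B₀ hB₀)
    · obtain ⟨A₀, hA₀, rfl⟩ := mem_image.mp hA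
      exact disjoint_singleton_right.mpr (hnotMem A₀ hA₀)
    · obtain ⟨A₀, hA₀, rfl⟩ := mem_image.mp hA
      obtain ⟨B₀, hB₀, rfl⟩ := mem_image.mp hB
      exact (disjoint_image (succAbove_strictMono i).injective).mpr
        (hdisj A₀ hA₀ B₀ hB₀ fun h => hAB (by rw [h]))
  · have hrange := image_succAbove_Icc hi1 hin
    constructor
    · intro hx
      by_cases hxi : x = i
      · exact ⟨{i}, mem_insert_self _ _, by simp [hxi]⟩
      · obtain ⟨y, hy, rfl⟩ := mem_image.mp (hrange ▸ mem_erase.mpr ⟨hxi, hx⟩)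
        obtain ⟨A₀, hA₀, hyA₀⟩ := (hcover y).mp hy
        exact ⟨_, mem_insert_of_mem (mem_image_of_mem _ hA₀), mem_image_of_mem _ hyA₀⟩
    · rintro ⟨A, hA, hxA⟩
      rcases mem_insert.mp hA with rfl | hA
      · rw [mem_singleton.mp hxA]
        exact mem_Icc.mpr ⟨hi1, hin⟩
      · obtain ⟨A₀, hA₀, rfl⟩ := mem_image.mp hA
        obtain ⟨y, hy, rfl⟩ := mem_image.mp hxA
        exact mem_of_mem_erase (hrange ▸ mem_image_of_mem _ ((hcover y).mpr ⟨A₀, hA₀, hy⟩))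

lemma not_crossing_insertSingleton (hπ : ¬ Crossing π) : ¬ Crossing (insertSingleton i π) := by
  rintro ⟨A, hA, B, hB, hAB, a, ha, b, hb, c, hc, d, hd, hac, hcb, hbd⟩
  rcases mem_insert.mp hA with rfl | hA
  · rw [mem_singleton] at ha hb
    omega
  rcases mem_insert.mp hB with rfl | hB
  · rw [mem_singleton] at hc hd
    omega
  obtain ⟨A₀, hA₀, rfl⟩ := mem_image.mp hA
  obtain ⟨B₀, hB₀, rfl⟩ := mem_image.mp hB
  obtain ⟨a₀, ha₀, rfl⟩ := mem_image.mp ha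
  obtain ⟨b₀, hb₀, rfl⟩ := mem_image.mp hb
  obtain ⟨c₀, hc₀, rfl⟩ := mem_image.mp hc
  obtain ⟨d₀, hd₀, rfl⟩ := mem_image.mp hd
  exact hπ ⟨A₀, hA₀, B₀, hB₀, fun h => hAB (by rw [h]), a₀, ha₀, b₀, hb₀, c₀, hc₀, d₀, hd₀,
    (succAbove_strictMono i).lt_iff_lt.mp hac,
    (succAbove_strictMono i).lt_iff_lt.mp hcb, (succAbove_strictMono i).lt_iff_lt.mp hbd⟩

lemma singleton_notMem_image_image (hπ : ∀ A ∈ π, 2 ≤ A.card) (j : ℕ) :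
    {j} ∉ π.image (image (succAbove i)) := by
  intro hj
  obtain ⟨A, hA, hAj⟩ := mem_image.mp hj
  have := congrArg card hAj
  rw [card_image_of_injective _ (succAbove_strictMono i).injective, card_singleton] at this
  linarith [hπ A hA]

lemma singleton_mem_insertSingleton_iff (hπ : ∀ A ∈ π, 2 ≤ A.card) {j : ℕ} :
    {j} ∈ insertSingleton i π ↔ j = i := by
  rw [insertSingleton, mem_insert, singleton_inj]
  exact or_iff_left (singleton_notMem_image_image hπ j)

lemma eq_of_insertSingleton_eq {i' : ℕ} {π' : Finset (Finset ℕ)} (hπ : ∀ A ∈ π, 2 ≤ A.card)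
    (hπ' : ∀ A ∈ π', 2 ≤ A.card) (h : insertSingleton i π = insertSingleton i' π') :
    i = i' ∧ π = π' := by
  obtain rfl : i = i' :=
    (singleton_mem_insertSingleton_iff hπ').mp (h ▸ (singleton_mem_insertSingleton_iff hπ).mpr rfl)
  have := congrArg (erase · {i}) h
  simp only [insertSingleton, erase_insert (singleton_notMem_image_image hπ i),
    erase_insert (singleton_notMem_image_image hπ' i)] at this
  exact ⟨rfl, image_injective (image_injective (succAbove_strictMono i).injective) this⟩

def oneSingleton (n : ℕ) : Set (Finset (Finset ℕ)) :=
  {π | IsNCPartition n π ∧ ∃! i, {i} ∈ π}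

theorem mul_ncard_singletonFree_le_ncard_oneSingleton (n : ℕ) :
    n * (singletonFree (n - 1)).ncard ≤ (oneSingleton n).ncard := by
  have hmaps : ∀ p ∈ (Icc 1 n : Set ℕ) ×ˢ singletonFree (n - 1),
      insertSingleton p.1 p.2 ∈ oneSingleton n := by
    rintro ⟨i, π⟩ ⟨hi, ⟨hπ, hnc⟩, hcard⟩
    obtain ⟨hi1, hin⟩ := mem_Icc.mp hi
    exact ⟨⟨isPartitionOf_insertSingleton hi1 hin hπ, not_crossing_insertSingleton hnc⟩,
      i, (singleton_mem_insertSingleton_iff hcard).mpr rfl,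
      fun j => (singleton_mem_insertSingleton_iff hcard).mp⟩
  have hinj : Set.InjOn (fun p : ℕ × Finset (Finset ℕ) => insertSingleton p.1 p.2)
      ((Icc 1 n : Set ℕ) ×ˢ singletonFree (n - 1)) := by
    rintro ⟨i, π⟩ ⟨-, -, hπ⟩ ⟨i', π'⟩ ⟨-, -, hπ'⟩ h
    obtain ⟨rfl, rfl⟩ := eq_of_insertSingleton_eq hπ hπ' h
    rfl
  calc n * (singletonFree (n - 1)).ncard
      = ((Icc 1 n : Set ℕ) ×ˢ singletonFree (n - 1)).ncard := by
        rw [Set.ncard_prod, Set.ncard_coe_finset, Nat.card_Icc, Nat.add_sub_cancel]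
    _ ≤ (oneSingleton n).ncard := Set.ncard_le_ncard_of_injOn _ hmaps hinj
        ((setOf_isPartitionOf_finite n).subset fun _ hπ => hπ.1.1)

end InsertSingleton

lemma isLonely_of_singleton_subsingleton {n : ℕ} {π : Finset (Finset ℕ)} (hπ : IsNCPartition n π)
    (h : ∀ i j, {i} ∈ π → {j} ∈ π → i = j) : IsLonely n π :=
  ⟨hπ, fun ⟨_, i, j, hij, hi, hj, _⟩ => hij (h i j hi hj)⟩

theorem ncard_singletonFree_add_ncard_oneSingleton_le (n : ℕ) :
    (singletonFree n).ncard + (oneSingleton n).ncard ≤ Lnum n := by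
  have hdisj : Disjoint (singletonFree n) (oneSingleton n) := by
    refine Set.disjoint_left.mpr fun π hfree hone => ?_
    obtain ⟨i, hi, -⟩ := hone.2
    simpa using hfree.2 _ hi
  have hsub : singletonFree n ∪ oneSingleton n ⊆ {π | IsLonely n π} := by
    rintro π (hfree | ⟨hπ, i, -, huniq⟩)
    · refine isLonely_of_singleton_subsingleton hfree.1 fun i j hi _ => ?_
      simpa using hfree.2 _ hi
    · exact isLonely_of_singleton_subsingleton hπ fun j k hj hk =>
        (huniq j hj).trans (huniq k hk).symm
  rw [← Set.ncard_union_eq hdisj (singletonFree_finite n)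
    ((setOf_isPartitionOf_finite n).subset fun _ hπ => hπ.1.1)]
  exact Set.ncard_le_ncard hsub ((setOf_isPartitionOf_finite n).subset fun _ hπ => hπ.1.1)

theorem sum_choose_div_le_ncard_singletonFree (n : ℕ) :
    ∑ m ∈ Icc 1 (n / 2), (1 / ((n : ℚ) - m + 1)) * n.choose m * (n - m - 1).choose (m - 1)
      ≤ (singletonFree n).ncard := by
  have hterm : ∀ m ∈ Icc 1 (n / 2),
      (1 / ((n : ℚ) - m + 1)) * n.choose m * (n - m - 1).choose (m - 1)
        = ((n + 1).choose m * (n - m - 1).choose (m - 1) : ℕ) / ((n : ℚ) + 1) := by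
    intro m hm
    have hmn : m ≤ n := by have := (mem_Icc.mp hm).2; omega
    have hpos : (0 : ℚ) < n - m + 1 := by
      have : (m : ℚ) ≤ n := by exact_mod_cast hmn
      linarith
    have hchoose : (n.choose m : ℚ) * (n + 1) = (n + 1).choose m * ((n : ℚ) - m + 1) := by
      rw [show (n : ℚ) - m + 1 = ((n + 1 - m : ℕ) : ℚ) by
        push_cast [Nat.cast_sub (by omega : m ≤ n + 1)]; ring]
      exact_mod_cast Nat.choose_mul_succ_eq n m
    field_simp
    push_cast
    linear_combination ((n - m - 1).choose (m - 1) : ℚ) * hchoose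
  rw [sum_congr rfl hterm, ← sum_div, div_le_iff₀ (by positivity), mul_comm]
  exact_mod_cast sum_choose_le_mul_ncard_singletonFree n

theorem sum_choose_le_mul_ncard_singletonFree_pred (n : ℕ) :
    ∑ m ∈ Icc 2 ((n + 1) / 2), n.choose (m - 1) * (n - m - 1).choose (m - 2)
      ≤ n * (singletonFree (n - 1)).ncard := by
  rcases n with _ | k
  · simp
  calc ∑ m ∈ Icc 2 ((k + 1 + 1) / 2), (k + 1).choose (m - 1) * (k + 1 - m - 1).choose (m - 2)
      = ∑ m ∈ Icc 1 (k / 2), (k + 1).choose m * (k - m - 1).choose (m - 1) := by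
        rw [show (k + 1 + 1) / 2 = k / 2 + 1 by omega, ← map_add_right_Icc 1 (k / 2) 1, sum_map]
        refine sum_congr rfl fun m _ => ?_
        simp only [addRightEmbedding_apply]
        congr 2
        omega
    _ ≤ (k + 1) * (singletonFree k).ncard := sum_choose_le_mul_ncard_singletonFree k

end NCPartition

theorem stmt14_general (n : ℕ) :
    (Lnum n : ℚ) ≥
      (∑ m ∈ Finset.Icc 1 (n / 2),
        (1 / ((n : ℚ) - m + 1)) * (n.choose m) * ((n - m - 1).choose (m - 1))) +
      (∑ m ∈ Finset.Icc 2 ((n + 1) / 2),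
        ((n.choose (m - 1) : ℚ)) * ((n - m - 1).choose (m - 2))) := by
  have hfree := NCPartition.sum_choose_div_le_ncard_singletonFree n
  have hone : ∑ m ∈ Finset.Icc 2 ((n + 1) / 2),
      ((n.choose (m - 1) : ℚ)) * ((n - m - 1).choose (m - 2))
        ≤ (NCPartition.oneSingleton n).ncard := by
    exact_mod_cast (NCPartition.sum_choose_le_mul_ncard_singletonFree_pred n).trans
      (NCPartition.mul_ncard_singletonFree_le_ncard_oneSingleton n)
  have hlonely : ((NCPartition.singletonFree n).ncard : ℚ) + (NCPartition.oneSingleton n).ncard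
      ≤ Lnum n := by
    exact_mod_cast NCPartition.ncard_singletonFree_add_ncard_oneSingleton_le n
  linarith

theorem stmt14 (n : ℕ) (hn : 2 ≤ n) :
    (Lnum n : ℚ) ≥
      (∑ m ∈ Finset.Icc 1 (n / 2),
        (1 / ((n : ℚ) - m + 1)) * (n.choose m) * ((n - m - 1).choose (m - 1))) +
      (∑ m ∈ Finset.Icc 2 ((n + 1) / 2),
        ((n.choose (m - 1) : ℚ)) * ((n - m - 1).choose (m - 2))) :=
  stmt14_general n
end

section
/- The set of marriageable singles partitions of [n] with exactly two singleton blocks {i} and {j} (i < j) whose merger remains noncrossing is in bijection with the set of triples ({i,j}, π₁, π₂) where 1 ≤ i < j ≤ n, π₁ is a noncrossing partition of [n+i−j−1] with no singleton block, and π₂ is a noncrossing partition of [j−i−1] with no singleton block. -/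
/-!
If the singletons `{i}` and `{j}` can be merged without creating a crossing, no other block
meets both the gap `(i, j)` and its complement, since such a block would cross `{i, j}`. The
remaining blocks therefore split into a noncrossing partition of `(i, j)` and one of
`[n] \ [i, j]`, neither of which has a singleton. Order-preserving relabelling of these sets as
`[j - i - 1]` and `[n + i - j - 1]` preserves and reflects crossings, and conversely any such pair
of singleton-free noncrossing partitions, together with `{i}` and `{j}`, reassembles into a
partition of this kind.
-/

section
open Finset

def IsPartitionOn (S : Finset ℕ) (π : Finset (Finset ℕ)) : Prop :=
  (∀ A ∈ π, A.Nonempty) ∧ (∀ A ∈ π, ∀ B ∈ π, A ≠ B → Disjoint A B) ∧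
    ∀ x, x ∈ S ↔ ∃ A ∈ π, x ∈ A

def IsNCPartitionOn (S : Finset ℕ) (π : Finset (Finset ℕ)) : Prop :=
  IsPartitionOn S π ∧ ¬Crossing π

theorem isNCPartition_iff {n : ℕ} {π : Finset (Finset ℕ)} :
    IsNCPartition n π ↔ IsNCPartitionOn (Icc 1 n) π :=
  Iff.rfl

theorem isPartitionOn_singleton {A : Finset ℕ} (hA : A.Nonempty) : IsPartitionOn A {A} :=
  ⟨by simpa, by simp, by simp⟩

namespace IsPartitionOn

variable {S T : Finset ℕ} {π σ τ : Finset (Finset ℕ)}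

theorem subset (h : IsPartitionOn S π) {A : Finset ℕ} (hA : A ∈ π) : A ⊆ S :=
  fun x hx => (h.2.2 x).2 ⟨A, hA, hx⟩

theorem union (hσ : IsPartitionOn S σ) (hτ : IsPartitionOn T τ) (hST : Disjoint S T) :
    IsPartitionOn (S ∪ T) (σ ∪ τ) := by
  refine ⟨?_, ?_, fun x => ?_⟩
  · intro A hA
    rcases mem_union.1 hA with hA | hA
    exacts [hσ.1 A hA, hτ.1 A hA]
  · intro A hA B hB hAB
    rcases mem_union.1 hA with hA | hA <;> rcases mem_union.1 hB with hB | hB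
    · exact hσ.2.1 A hA B hB hAB
    · exact hST.mono (hσ.subset hA) (hτ.subset hB)
    · exact (hST.mono (hσ.subset hB) (hτ.subset hA)).symm
    · exact hτ.2.1 A hA B hB hAB
  · simp only [mem_union, hσ.2.2 x, hτ.2.2 x, or_and_right, exists_or]

theorem insert {A : Finset ℕ} (hA : A.Nonempty) (h : IsPartitionOn S σ) (hAS : Disjoint A S) :
    IsPartitionOn (A ∪ S) (insert A σ) := by
  rw [insert_eq]
  exact (isPartitionOn_singleton hA).union h hAS

theorem filter_subset (h : IsPartitionOn S π) (hTS : T ⊆ S)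
    (hsplit : ∀ A ∈ π, A ⊆ T ∨ Disjoint A T) : IsPartitionOn T (π.filter (· ⊆ T)) := by
  refine ⟨fun A hA => h.1 A (mem_filter.1 hA).1,
    fun A hA B hB => h.2.1 A (mem_filter.1 hA).1 B (mem_filter.1 hB).1,
    fun x => ⟨fun hx => ?_, ?_⟩⟩
  · obtain ⟨A, hA, hxA⟩ := (h.2.2 x).1 (hTS hx)
    have hAT : A ⊆ T := (hsplit A hA).resolve_right fun hd => disjoint_left.1 hd hxA hx
    exact ⟨A, mem_filter.2 ⟨hA, hAT⟩, hxA⟩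
  · rintro ⟨A, hA, hxA⟩
    exact (mem_filter.1 hA).2 hxA

theorem filter_subset_union (hσ : IsPartitionOn S σ) (hτ : IsPartitionOn T τ)
    (hST : Disjoint S T) : (σ ∪ τ).filter (· ⊆ S) = σ := by
  rw [filter_union, filter_true_of_mem fun A hA => hσ.subset hA, union_eq_left]
  intro B hB
  obtain ⟨hBτ, hBS⟩ := mem_filter.1 hB
  obtain ⟨x, hx⟩ := hτ.1 B hBτ
  exact absurd (hτ.subset hBτ hx) (disjoint_left.1 hST (hBS hx))

end IsPartitionOn

def Crosses (A B : Finset ℕ) : Prop :=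
  ∃ a ∈ A, ∃ b ∈ A, ∃ c ∈ B, ∃ d ∈ B, a < c ∧ c < b ∧ b < d

theorem crossing_iff {π : Finset (Finset ℕ)} :
    Crossing π ↔ ∃ A ∈ π, ∃ B ∈ π, A ≠ B ∧ Crosses A B :=
  Iff.rfl

theorem Crossing.mono {σ π : Finset (Finset ℕ)} (hσπ : σ ⊆ π) (h : Crossing σ) :
    Crossing π := by
  obtain ⟨A, hA, B, hB, hAB, hAB'⟩ := h
  exact ⟨A, hσπ hA, B, hσπ hB, hAB, hAB'⟩

theorem not_crossing_singleton (A : Finset ℕ) : ¬Crossing {A} := by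
  simp [crossing_iff]

theorem not_crosses_singleton_left (x : ℕ) (B : Finset ℕ) : ¬Crosses {x} B := by
  rintro ⟨a, ha, b, hb, c, -, d, -, hac, hcb, -⟩
  rw [mem_singleton] at ha hb
  omega

theorem not_crosses_singleton_right (A : Finset ℕ) (x : ℕ) : ¬Crosses A {x} := by
  rintro ⟨a, -, b, -, c, hc, d, hd, -, hcb, hbd⟩
  rw [mem_singleton] at hc hd
  omega

theorem not_crossing_union {σ τ : Finset (Finset ℕ)} (hσ : ¬Crossing σ) (hτ : ¬Crossing τ)
    (h : ∀ A ∈ σ, ∀ B ∈ τ, ¬Crosses A B ∧ ¬Crosses B A) : ¬Crossing (σ ∪ τ) := by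
  rintro ⟨A, hA, B, hB, hAB, hcross⟩
  rcases mem_union.1 hA with hA | hA <;> rcases mem_union.1 hB with hB | hB
  · exact hσ ⟨A, hA, B, hB, hAB, hcross⟩
  · exact (h A hA B hB).1 hcross
  · exact (h B hB A hA).2 hcross
  · exact hτ ⟨A, hA, B, hB, hAB, hcross⟩

theorem not_crossing_insert_singleton {π : Finset (Finset ℕ)} (x : ℕ) (h : ¬Crossing π) :
    ¬Crossing (insert {x} π) := by
  rw [insert_eq]
  exact not_crossing_union (not_crossing_singleton _) h fun _ hA B _ => by
    rw [mem_singleton.1 hA]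
    exact ⟨not_crosses_singleton_left x B, not_crosses_singleton_right B x⟩

end

section
open Finset

variable {A B : Finset ℕ} {i j : ℕ}

theorem not_crosses_of_subset_Ioo (hA : Disjoint A (Ioo i j)) (hB : B ⊆ Ioo i j) :
    ¬Crosses A B ∧ ¬Crosses B A := by
  constructor
  · rintro ⟨a, ha, b, hb, c, hc, d, hd, hac, hcb, hbd⟩
    have ha' := disjoint_left.1 hA ha
    have hb' := disjoint_left.1 hA hb
    have hc' := hB hc
    have hd' := hB hd
    simp only [mem_Ioo] at ha' hb' hc' hd'
    omega
  · rintro ⟨a, ha, b, hb, c, hc, -, -, hac, hcb, -⟩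
    have ha' := hB ha
    have hb' := hB hb
    have hc' := disjoint_left.1 hA hc
    simp only [mem_Ioo] at ha' hb' hc'
    omega

theorem not_crosses_pair (hij : i ≤ j) (hA : Disjoint A (Ioo i j)) :
    ¬Crosses {i, j} A ∧ ¬Crosses A {i, j} := by
  constructor
  · rintro ⟨a, ha, b, hb, c, hc, -, -, hac, hcb, -⟩
    have hc' := disjoint_left.1 hA hc
    simp only [mem_insert, mem_singleton, mem_Ioo] at ha hb hc'
    omega
  · rintro ⟨-, -, b, hb, c, hc, d, hd, -, hcb, hbd⟩
    have hb' := disjoint_left.1 hA hb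
    simp only [mem_insert, mem_singleton, mem_Ioo] at hc hd hb'
    omega

theorem subset_Ioo_or_disjoint_Icc (hi : i ∉ A) (hj : j ∉ A) (h : ¬Crosses {i, j} A)
    (h' : ¬Crosses A {i, j}) : A ⊆ Ioo i j ∨ Disjoint A (Icc i j) := by
  by_cases hmeets : ∃ c ∈ A, c ∈ Ioo i j
  · obtain ⟨c, hcA, hc⟩ := hmeets
    refine Or.inl fun x hxA => by_contra fun hx => ?_
    have hxi : x ≠ i := ne_of_mem_of_not_mem hxA hi
    have hxj : x ≠ j := ne_of_mem_of_not_mem hxA hj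
    rw [mem_Ioo] at hc hx
    rcases Nat.lt_or_gt_of_ne hxi with hxi | hxi
    · exact h' ⟨x, hxA, c, hcA, i, by simp, j, by simp, hxi, hc.1, hc.2⟩
    · exact h ⟨i, by simp, j, by simp, c, hcA, x, hxA, hc.1, hc.2, by omega⟩
  · push Not at hmeets
    refine Or.inr (disjoint_left.2 fun x hxA hx => hmeets x hxA ?_)
    have hxi : x ≠ i := ne_of_mem_of_not_mem hxA hi
    have hxj : x ≠ j := ne_of_mem_of_not_mem hxA hj
    rw [mem_Icc] at hx
    rw [mem_Ioo]
    omega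

end

section
open Finset Function

def relabel (f : ℕ → ℕ) (π : Finset (Finset ℕ)) : Finset (Finset ℕ) :=
  π.image (image f)

variable {f : ℕ → ℕ} {S : Finset ℕ} {π σ : Finset (Finset ℕ)}

theorem relabel_injective (hf : Injective f) : Injective (relabel f) :=
  image_injective (image_injective hf)

theorem forall_card_ne_one_relabel_iff (hf : Injective f) :
    (∀ A ∈ relabel f π, A.card ≠ 1) ↔ ∀ A ∈ π, A.card ≠ 1 := by
  simp only [relabel, forall_mem_image, card_image_of_injective _ hf]

theorem isPartitionOn_relabel_iff (hf : Injective f) :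
    IsPartitionOn (S.image f) (relabel f π) ↔ IsPartitionOn S π := by
  have hcover : (∀ y, y ∈ S.image f ↔ ∃ A ∈ relabel f π, y ∈ A) ↔
      ∀ x, x ∈ S ↔ ∃ A ∈ π, x ∈ A := by
    refine ⟨fun h x => by
        simpa only [hf.mem_finset_image, relabel, exists_mem_image] using h (f x),
      fun h y => ⟨fun hy => ?_, ?_⟩⟩
    · obtain ⟨x, hx, rfl⟩ := mem_image.1 hy
      obtain ⟨A, hA, hxA⟩ := (h x).1 hx
      exact ⟨A.image f, mem_image_of_mem _ hA, mem_image_of_mem f hxA⟩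
    · rintro ⟨A', hA', hyA⟩
      obtain ⟨A, hA, rfl⟩ := mem_image.1 hA'
      obtain ⟨x, hxA, rfl⟩ := mem_image.1 hyA
      exact mem_image_of_mem f ((h x).2 ⟨A, hA, hxA⟩)
  rw [IsPartitionOn, IsPartitionOn, hcover]
  simp only [relabel, forall_mem_image, image_nonempty, (image_injective hf).ne_iff,
    disjoint_image hf]

theorem crossing_relabel_iff (hf : StrictMono f) : Crossing (relabel f π) ↔ Crossing π := by
  simp only [crossing_iff, Crosses, relabel, exists_mem_image, hf.lt_iff_lt,
    (image_injective hf.injective).ne_iff]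

theorem isNCPartitionOn_relabel_iff (hf : StrictMono f) :
    IsNCPartitionOn (S.image f) (relabel f π) ↔ IsNCPartitionOn S π := by
  rw [IsNCPartitionOn, IsNCPartitionOn, isPartitionOn_relabel_iff hf.injective,
    crossing_relabel_iff hf]

theorem exists_relabel_eq (h : ∀ A ∈ σ, A ⊆ S.image f) : ∃ π, relabel f π = σ := by
  have hσ : σ ⊆ S.powerset.image (image f) := fun A hA => by
    obtain ⟨B, hBS, rfl⟩ := subset_image_iff.1 (h A hA)
    exact mem_image_of_mem _ (mem_powerset.2 hBS)
  obtain ⟨π, -, hπ⟩ := subset_image_iff.1 hσ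
  exact ⟨π, hπ⟩

end

section
open Finset

/-- For `i ≤ j`, the increasing enumeration of `ℕ \ [i, j]`. -/
def skipIcc (i j y : ℕ) : ℕ := if y < i then y else y + (j + 1 - i)

theorem strictMono_skipIcc (i j : ℕ) : StrictMono (skipIcc i j) := by
  intro x y hxy
  unfold skipIcc
  split_ifs <;> omega

theorem image_skipIcc_Icc {n i j : ℕ} (hi : 1 ≤ i) (hij : i ≤ j) (hjn : j ≤ n) :
    (Icc 1 (n + i - j - 1)).image (skipIcc i j) = Icc 1 n \ Icc i j := by
  ext x
  simp only [mem_image, mem_Icc, mem_sdiff, skipIcc]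
  constructor
  · rintro ⟨y, hy, rfl⟩
    split_ifs <;> omega
  · intro hx
    by_cases hxi : x < i
    · exact ⟨x, by omega, if_pos hxi⟩
    · exact ⟨x - (j + 1 - i), by omega, by rw [if_neg (by omega)]; omega⟩

theorem image_add_Icc (i j : ℕ) : (Icc 1 (j - i - 1)).image (· + i) = Ioo i j := by
  ext x
  simp only [mem_image, mem_Icc, mem_Ioo]
  constructor
  · rintro ⟨y, hy, rfl⟩
    omega
  · intro hx
    exact ⟨x - i, by omega, by omega⟩

end

section
open Finset

variable {n i j : ℕ} {π σ τ R : Finset (Finset ℕ)}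

theorem filter_card_eq_one_insert_insert (hR : ∀ A ∈ R, A.card ≠ 1) :
    (insert {i} (insert {j} R)).filter (·.card = 1) = {{i}, {j}} := by
  rw [filter_insert, filter_insert, filter_false_of_mem hR]
  simp

theorem mergeSingles_insert_insert (hij : i ≠ j) (hR : ∀ A ∈ R, A.card ≠ 1) :
    mergeSingles (insert {i} (insert {j} R)) i j = insert {i, j} R := by
  have hiR : ({i} : Finset ℕ) ∉ R := fun h => hR _ h (card_singleton i)
  have hjR : ({j} : Finset ℕ) ∉ R := fun h => hR _ h (card_singleton j)
  rw [mergeSingles, erase_insert (by simp [hiR, hij]), erase_insert hjR]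

theorem disjoint_outside_Ioo : Disjoint (Icc 1 n \ Icc i j) (Ioo i j) := by
  rw [disjoint_left]
  intro x
  simp only [mem_sdiff, mem_Icc, mem_Ioo]
  omega

theorem isNCPartitionOn_union_outside_Ioo (hσ : IsNCPartitionOn (Icc 1 n \ Icc i j) σ)
    (hτ : IsNCPartitionOn (Ioo i j) τ) :
    IsNCPartitionOn (Icc 1 n \ Icc i j ∪ Ioo i j) (σ ∪ τ) :=
  ⟨hσ.1.union hτ.1 disjoint_outside_Ioo, not_crossing_union hσ.2 hτ.2 fun _ hA _ hB =>
    not_crosses_of_subset_Ioo (disjoint_outside_Ioo.mono_left (hσ.1.subset hA))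
      (hτ.1.subset hB)⟩

theorem isNCPartition_insert_insert (hi : 1 ≤ i) (hij : i < j) (hjn : j ≤ n)
    (hσ : IsNCPartitionOn (Icc 1 n \ Icc i j) σ) (hτ : IsNCPartitionOn (Ioo i j) τ) :
    IsNCPartition n (insert {i} (insert {j} (σ ∪ τ))) := by
  obtain ⟨hR, hRc⟩ := isNCPartitionOn_union_outside_Ioo hσ hτ
  have hcover : {i} ∪ ({j} ∪ (Icc 1 n \ Icc i j ∪ Ioo i j)) = Icc 1 n := by
    ext x
    simp only [mem_union, mem_singleton, mem_sdiff, mem_Icc, mem_Ioo]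
    omega
  refine ⟨?_, not_crossing_insert_singleton i (not_crossing_insert_singleton j hRc)⟩
  rw [IsPartitionOf, ← hcover]
  refine (hR.insert (singleton_nonempty j) ?_).insert (singleton_nonempty i) ?_ <;>
  · simp only [disjoint_singleton_left, mem_union, mem_singleton, mem_sdiff, mem_Icc, mem_Ioo]
    omega

theorem isNCPartition_insert_pair (hi : 1 ≤ i) (hij : i < j) (hjn : j ≤ n)
    (hσ : IsNCPartitionOn (Icc 1 n \ Icc i j) σ) (hτ : IsNCPartitionOn (Ioo i j) τ) :
    IsNCPartition n (insert {i, j} (σ ∪ τ)) := by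
  obtain ⟨hR, hRc⟩ := isNCPartitionOn_union_outside_Ioo hσ hτ
  have hcover : {i, j} ∪ (Icc 1 n \ Icc i j ∪ Ioo i j) = Icc 1 n := by
    ext x
    simp only [mem_union, mem_insert, mem_singleton, mem_sdiff, mem_Icc, mem_Ioo]
    omega
  have hpair : Disjoint {i, j} (Ioo i j) := by simp
  refine ⟨?_, ?_⟩
  · rw [IsPartitionOf, ← hcover]
    refine hR.insert (insert_nonempty i {j}) ?_
    rw [disjoint_left]
    simp only [mem_union, mem_insert, mem_singleton, mem_sdiff, mem_Icc, mem_Ioo]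
    omega
  · rw [insert_eq]
    refine not_crossing_union (not_crossing_singleton _) hRc fun A hA B hB => ?_
    rw [mem_singleton.1 hA]
    rcases mem_union.1 hB with hB | hB
    · exact not_crosses_pair hij.le (disjoint_outside_Ioo.mono_left (hσ.1.subset hB))
    · exact not_crosses_of_subset_Ioo hpair (hτ.1.subset hB)

theorem filter_subset_outside_insert_insert (hij : i ≤ j)
    (hσ : IsPartitionOn (Icc 1 n \ Icc i j) σ) (hτ : IsPartitionOn (Ioo i j) τ) :
    (insert {i} (insert {j} (σ ∪ τ))).filter (· ⊆ Icc 1 n \ Icc i j) = σ := by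
  rw [filter_insert, filter_insert, if_neg (by simp [hij]), if_neg (by simp [hij]),
    hσ.filter_subset_union hτ disjoint_outside_Ioo]

theorem filter_subset_Ioo_insert_insert
    (hσ : IsPartitionOn (Icc 1 n \ Icc i j) σ) (hτ : IsPartitionOn (Ioo i j) τ) :
    (insert {i} (insert {j} (σ ∪ τ))).filter (· ⊆ Ioo i j) = τ := by
  rw [filter_insert, filter_insert, if_neg (by simp), if_neg (by simp), union_comm,
    hτ.filter_subset_union hσ disjoint_outside_Ioo.symm]

end

section
open Finset

variable {n i j : ℕ} {π : Finset (Finset ℕ)} {S T : Finset ℕ}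

theorem IsNCPartitionOn.filter_subset (h : IsNCPartitionOn S π) (hTS : T ⊆ S)
    (hsplit : ∀ A ∈ π, A ⊆ T ∨ Disjoint A T) : IsNCPartitionOn T (π.filter (· ⊆ T)) :=
  ⟨h.1.filter_subset hTS hsplit, fun hc => h.2 (hc.mono (Finset.filter_subset _ _))⟩

theorem forall_card_ne_one_filter_subset (hsingles : π.filter (fun A => A.card = 1) = {{i}, {j}})
    (hi : i ∉ T) (hj : j ∉ T) : ∀ A ∈ π.filter (· ⊆ T), A.card ≠ 1 := by
  intro A hA hcard
  have hA' : A ∈ π.filter (fun A => A.card = 1) := mem_filter.2 ⟨(mem_filter.1 hA).1, hcard⟩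
  rw [hsingles, mem_insert, mem_singleton] at hA'
  rcases hA' with rfl | rfl
  · exact hi ((mem_filter.1 hA).2 (mem_singleton_self i))
  · exact hj ((mem_filter.1 hA).2 (mem_singleton_self j))

theorem eq_singleton_or_subset_of_mergeSingles (hπ : IsNCPartitionOn (Icc 1 n) π)
    (hi : {i} ∈ π) (hj : {j} ∈ π) (hmerge : ¬Crossing (mergeSingles π i j))
    {A : Finset ℕ} (hA : A ∈ π) :
    A = {i} ∨ A = {j} ∨ A ⊆ Ioo i j ∨ A ⊆ Icc 1 n \ Icc i j := by
  by_cases hAi : A = {i}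
  · exact Or.inl hAi
  by_cases hAj : A = {j}
  · exact Or.inr (Or.inl hAj)
  have hiA : i ∉ A := disjoint_singleton_left.1 (hπ.1.2.1 _ hi A hA (Ne.symm hAi))
  have hjA : j ∉ A := disjoint_singleton_left.1 (hπ.1.2.1 _ hj A hA (Ne.symm hAj))
  have hAm : A ∈ mergeSingles π i j :=
    mem_insert_of_mem (mem_erase.2 ⟨hAj, mem_erase.2 ⟨hAi, hA⟩⟩)
  have hpair : ({i, j} : Finset ℕ) ∈ mergeSingles π i j := mem_insert_self _ _
  have hne : ({i, j} : Finset ℕ) ≠ A := fun h => hiA (h ▸ mem_insert_self i {j})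
  rcases subset_Ioo_or_disjoint_Icc hiA hjA (fun h => hmerge ⟨_, hpair, A, hAm, hne, h⟩)
      (fun h => hmerge ⟨A, hAm, _, hpair, hne.symm, h⟩) with h | h
  · exact Or.inr (Or.inr (Or.inl h))
  · exact Or.inr (Or.inr (Or.inr (subset_sdiff.2 ⟨hπ.1.subset hA, h⟩)))

theorem filter_card_eq_one_eq_pair (hcard : (π.filter fun A => A.card = 1).card = 2)
    (hij : i ≠ j) (hi : {i} ∈ π) (hj : {j} ∈ π) :
    π.filter (fun A => A.card = 1) = {{i}, {j}} :=
  (eq_of_subset_of_card_le (by simp [insert_subset_iff, hi, hj])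
    (by rw [hcard, card_pair (by simpa using hij)])).symm

theorem subset_or_disjoint_of_eq_singleton_or_subset {A : Finset ℕ} (hij : i ≤ j)
    (h : A = {i} ∨ A = {j} ∨ A ⊆ Ioo i j ∨ A ⊆ Icc 1 n \ Icc i j) :
    (A ⊆ Icc 1 n \ Icc i j ∨ Disjoint A (Icc 1 n \ Icc i j)) ∧
      (A ⊆ Ioo i j ∨ Disjoint A (Ioo i j)) := by
  rcases h with rfl | rfl | h | h
  · exact ⟨Or.inr (by simp [hij]), Or.inr (by simp)⟩
  · exact ⟨Or.inr (by simp [hij]), Or.inr (by simp)⟩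
  · exact ⟨Or.inr (disjoint_outside_Ioo.symm.mono_left h), Or.inl h⟩
  · exact ⟨Or.inl h, Or.inr (disjoint_outside_Ioo.mono_left h)⟩

theorem exists_eq_insert_insert (hπ : IsNCPartition n π)
    (hcard : (π.filter fun A => A.card = 1).card = 2) (hij : i < j) (hi : {i} ∈ π)
    (hj : {j} ∈ π) (hmerge : IsNCPartition n (mergeSingles π i j)) :
    1 ≤ i ∧ j ≤ n ∧ ∃ σ τ,
      IsNCPartitionOn (Icc 1 n \ Icc i j) σ ∧ (∀ A ∈ σ, A.card ≠ 1) ∧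
      IsNCPartitionOn (Ioo i j) τ ∧ (∀ A ∈ τ, A.card ≠ 1) ∧
      insert {i} (insert {j} (σ ∪ τ)) = π := by
  rw [isNCPartition_iff] at hπ
  have hiI : i ∈ Icc 1 n := (hπ.1.2.2 i).2 ⟨_, hi, mem_singleton_self i⟩
  have hjI : j ∈ Icc 1 n := (hπ.1.2.2 j).2 ⟨_, hj, mem_singleton_self j⟩
  rw [mem_Icc] at hiI hjI
  have hsingles := filter_card_eq_one_eq_pair hcard hij.ne hi hj
  have hclass := fun A (hA : A ∈ π) =>
    eq_singleton_or_subset_of_mergeSingles hπ hi hj hmerge.2 hA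
  have hsplit := fun A (hA : A ∈ π) =>
    subset_or_disjoint_of_eq_singleton_or_subset hij.le (hclass A hA)
  refine ⟨hiI.1, hjI.2, _, _, hπ.filter_subset sdiff_subset fun A hA => (hsplit A hA).1,
    forall_card_ne_one_filter_subset hsingles (by simp [hij.le]) (by simp [hij.le]),
    hπ.filter_subset (fun x hx => ?_) fun A hA => (hsplit A hA).2,
    forall_card_ne_one_filter_subset hsingles (by simp) (by simp), ?_⟩
  · rw [mem_Ioo] at hx
    rw [mem_Icc]
    omega
  ext A
  simp only [mem_insert, mem_union, mem_filter]
  constructor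
  · rintro (rfl | rfl | ⟨hA, -⟩ | ⟨hA, -⟩) <;> assumption
  · intro hA
    rcases hclass A hA with h | h | h | h
    exacts [Or.inl h, Or.inr (Or.inl h), Or.inr (Or.inr (Or.inr ⟨hA, h⟩)),
      Or.inr (Or.inr (Or.inl ⟨hA, h⟩))]

end

section
open Finset

def IsMarriageableTwoSingles (n : ℕ) (π : Finset (Finset ℕ)) : Prop :=
  IsNCPartition n π ∧ (π.filter fun A => A.card = 1).card = 2 ∧
    ∃ i j : ℕ, i < j ∧ ({i} : Finset ℕ) ∈ π ∧ ({j} : Finset ℕ) ∈ π ∧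
      IsNCPartition n (mergeSingles π i j)

def IsNCTriple (n : ℕ) (t : (ℕ × ℕ) × Finset (Finset ℕ) × Finset (Finset ℕ)) : Prop :=
  1 ≤ t.1.1 ∧ t.1.1 < t.1.2 ∧ t.1.2 ≤ n ∧
    IsNCPartition (n + t.1.1 - t.1.2 - 1) t.2.1 ∧ (∀ A ∈ t.2.1, A.card ≠ 1) ∧
    IsNCPartition (t.1.2 - t.1.1 - 1) t.2.2 ∧ (∀ A ∈ t.2.2, A.card ≠ 1)

def assemble : (ℕ × ℕ) × Finset (Finset ℕ) × Finset (Finset ℕ) → Finset (Finset ℕ)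
  | ((i, j), π₁, π₂) =>
    insert {i} (insert {j} (relabel (skipIcc i j) π₁ ∪ relabel (· + i) π₂))

variable {n i j : ℕ} {π₁ π₂ : Finset (Finset ℕ)}

theorem isNCPartitionOn_relabel_skipIcc (hi : 1 ≤ i) (hij : i ≤ j) (hjn : j ≤ n)
    (h : IsNCPartition (n + i - j - 1) π₁) :
    IsNCPartitionOn (Icc 1 n \ Icc i j) (relabel (skipIcc i j) π₁) := by
  rw [← image_skipIcc_Icc hi hij hjn]
  exact (isNCPartitionOn_relabel_iff (strictMono_skipIcc i j)).2 h

theorem isNCPartitionOn_relabel_add (h : IsNCPartition (j - i - 1) π₂) :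
    IsNCPartitionOn (Ioo i j) (relabel (· + i) π₂) := by
  rw [← image_add_Icc i j]
  exact (isNCPartitionOn_relabel_iff (strictMono_id.add_const i)).2 h

theorem IsNCTriple.relabel_pieces (ht : IsNCTriple n ((i, j), π₁, π₂)) :
    IsNCPartitionOn (Icc 1 n \ Icc i j) (relabel (skipIcc i j) π₁) ∧
      IsNCPartitionOn (Ioo i j) (relabel (· + i) π₂) ∧
      ∀ A ∈ relabel (skipIcc i j) π₁ ∪ relabel (· + i) π₂, A.card ≠ 1 := by
  obtain ⟨hi, hij, hjn, H₁, s₁, H₂, s₂⟩ := ht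
  refine ⟨isNCPartitionOn_relabel_skipIcc hi hij.le hjn H₁, isNCPartitionOn_relabel_add H₂,
    ?_⟩
  rw [forall_mem_union, forall_card_ne_one_relabel_iff (strictMono_skipIcc i j).injective,
    forall_card_ne_one_relabel_iff (add_left_injective i)]
  exact ⟨s₁, s₂⟩

theorem IsNCTriple.isMarriageableTwoSingles_assemble {t} (ht : IsNCTriple n t) :
    IsMarriageableTwoSingles n (assemble t) := by
  obtain ⟨⟨i, j⟩, π₁, π₂⟩ := t
  obtain ⟨hσ, hτ, hR⟩ := ht.relabel_pieces
  obtain ⟨hi, hij, hjn, -⟩ := ht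
  refine ⟨isNCPartition_insert_insert hi hij hjn hσ hτ, ?_, i, j, hij, mem_insert_self _ _,
    mem_insert_of_mem (mem_insert_self _ _), ?_⟩
  · rw [assemble, filter_card_eq_one_insert_insert hR, card_pair (by simpa using hij.ne)]
  · rw [assemble, mergeSingles_insert_insert hij.ne hR]
    exact isNCPartition_insert_pair hi hij hjn hσ hτ

theorem singleton_pair_inj {i j i' j' : ℕ} (hij : i < j) (hij' : i' < j')
    (h : ({{i}, {j}} : Finset (Finset ℕ)) = {{i'}, {j'}}) : i = i' ∧ j = j' := by
  have hi := (Finset.ext_iff.1 h {i}).1 (by simp)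
  have hj := (Finset.ext_iff.1 h {j}).1 (by simp)
  have hi' := (Finset.ext_iff.1 h {i'}).2 (by simp)
  simp only [mem_insert, mem_singleton, singleton_inj] at hi hj hi'
  omega

theorem assemble_injOn : Set.InjOn assemble {t | IsNCTriple n t} := by
  rintro ⟨⟨i, j⟩, π₁, π₂⟩ ht ⟨⟨i', j'⟩, π₁', π₂'⟩ ht' h
  obtain ⟨hσ, hτ, hR⟩ := IsNCTriple.relabel_pieces ht
  obtain ⟨hσ', hτ', hR'⟩ := IsNCTriple.relabel_pieces ht'
  simp only [assemble] at h
  obtain ⟨rfl, rfl⟩ : i = i' ∧ j = j' := by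
    refine singleton_pair_inj ht.2.1 ht'.2.1 ?_
    rw [← filter_card_eq_one_insert_insert hR, h, filter_card_eq_one_insert_insert hR']
  have h₁ := filter_subset_outside_insert_insert ht.2.1.le hσ.1 hτ.1
  have h₂ := filter_subset_Ioo_insert_insert hσ.1 hτ.1
  rw [h, filter_subset_outside_insert_insert ht.2.1.le hσ'.1 hτ'.1] at h₁
  rw [h, filter_subset_Ioo_insert_insert hσ'.1 hτ'.1] at h₂
  rw [relabel_injective (strictMono_skipIcc i j).injective h₁,
    relabel_injective (add_left_injective i) h₂]

theorem IsMarriageableTwoSingles.exists_assemble_eq {π : Finset (Finset ℕ)}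
    (hπ : IsMarriageableTwoSingles n π) : ∃ t, IsNCTriple n t ∧ assemble t = π := by
  obtain ⟨hNC, hcard, i, j, hij, hi, hj, hmerge⟩ := hπ
  obtain ⟨hi1, hjn, σ, τ, hσ, sσ, hτ, sτ, rfl⟩ :=
    exists_eq_insert_insert hNC hcard hij hi hj hmerge
  rw [← image_skipIcc_Icc hi1 hij.le hjn] at hσ
  rw [← image_add_Icc i j] at hτ
  obtain ⟨π₁, rfl⟩ := exists_relabel_eq fun A hA => hσ.1.subset hA
  obtain ⟨π₂, rfl⟩ := exists_relabel_eq fun A hA => hτ.1.subset hA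
  exact ⟨((i, j), π₁, π₂), ⟨hi1, hij, hjn,
    (isNCPartitionOn_relabel_iff (strictMono_skipIcc i j)).1 hσ,
    (forall_card_ne_one_relabel_iff (strictMono_skipIcc i j).injective).1 sσ,
    (isNCPartitionOn_relabel_iff (strictMono_id.add_const i)).1 hτ,
    (forall_card_ne_one_relabel_iff (add_left_injective i)).1 sτ⟩, rfl⟩

end

theorem stmt15 (n : ℕ) :
    Nonempty
      ({π : Finset (Finset ℕ) // IsNCPartition n π ∧
          (π.filter fun A => A.card = 1).card = 2 ∧
          ∃ i j : ℕ, i < j ∧ ({i} : Finset ℕ) ∈ π ∧ ({j} : Finset ℕ) ∈ π ∧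
            IsNCPartition n (mergeSingles π i j)} ≃
        {t : (ℕ × ℕ) × Finset (Finset ℕ) × Finset (Finset ℕ) //
          1 ≤ t.1.1 ∧ t.1.1 < t.1.2 ∧ t.1.2 ≤ n ∧
          IsNCPartition (n + t.1.1 - t.1.2 - 1) t.2.1 ∧ (∀ A ∈ t.2.1, A.card ≠ 1) ∧
          IsNCPartition (t.1.2 - t.1.1 - 1) t.2.2 ∧ (∀ A ∈ t.2.2, A.card ≠ 1)}) := by
  let toPartition (t : {t // IsNCTriple n t}) : {π // IsMarriageableTwoSingles n π} :=
    ⟨assemble t.1, t.2.isMarriageableTwoSingles_assemble⟩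
  have hinj : Function.Injective toPartition := fun t t' h =>
    Subtype.ext (assemble_injOn t.2 t'.2 (congrArg Subtype.val h))
  have hsurj : Function.Surjective toPartition := fun π => by
    obtain ⟨t, ht, hπ⟩ := π.2.exists_assemble_eq
    exact ⟨⟨t, ht⟩, Subtype.ext hπ⟩
  exact ⟨(Equiv.ofBijective toPartition ⟨hinj, hsurj⟩).symm⟩
end
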